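/- arXiv:0805.2081 — 12 statements merged into one kernel-verified Lean document; each statement's English description precedes it below -/
import Mathlib

section
/- Let n ≥ 1 and let c be a nonzero real number. If A is an n×n random real matrix whose entries A_ij are independent, each distributed according to a Borel probability measure μ_ij on ℝ that is atomless off 0, then P(det A = c) = 0. -/
/-!
Expanding along the first row, `det A = ∑ j, C j * A 0 j` with cofactors `C j` that depend only
on the other rows. By Fubini it therefore suffices that, for every fixed choice of those rows,
the affine hyperplane `{a | C ⬝ᵥ a = c}` is null for the product of the laws of the first row.
This holds by induction on the dimension because `c ≠ 0`: once the other coordinates are fixed,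
either their partial sum already equals `c` (a null event by induction), or the first coordinate
is pinned to a single nonzero value, which is not an atom.
-/

open MeasureTheory

theorem MeasureTheory.Measure.pi_eq_zero_of_ae_cons {β : Type*} [MeasurableSpace β] {m : ℕ}
    (μ : Fin (m + 1) → Measure β) [∀ i, SigmaFinite (μ i)] {S : Set (Fin (m + 1) → β)}
    (hS : MeasurableSet S)
    (h : ∀ᵐ y ∂Measure.pi (fun j => μ j.succ), μ 0 {x | Fin.cons x y ∈ S} = 0) :
    Measure.pi μ S = 0 := by
  have e := (measurePreserving_piFinSuccAbove μ 0).symm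
  rw [← e.measure_preimage hS.nullMeasurableSet,
    Measure.prod_apply_symm (MeasurableEquiv.measurable _ hS)]
  simp only [Fin.zero_succAbove] at h ⊢
  simp only [Set.preimage, MeasurableEquiv.piFinSuccAbove_symm_apply, Fin.insertNthEquiv_zero]
  exact (lintegral_congr_ae h).trans lintegral_zero

theorem measure_setOf_mul_eq_eq_zero {μ : Measure ℝ} (hμ : ∀ x, x ≠ 0 → μ {x} = 0) (a : ℝ)
    {b : ℝ} (hb : b ≠ 0) : μ {x | a * x = b} = 0 := by
  rcases eq_or_ne a 0 with rfl | ha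
  · simp [Ne.symm hb]
  · have hsingleton : {x | a * x = b} = {b / a} := by
      ext x; simp [eq_div_iff ha, mul_comm]
    rw [hsingleton]
    exact hμ _ (div_ne_zero hb ha)

theorem measure_pi_setOf_dotProduct_eq_eq_zero {m : ℕ} (μ : Fin m → Measure ℝ)
    [∀ i, SigmaFinite (μ i)] (hμ : ∀ i, ∀ x, x ≠ 0 → μ i {x} = 0) (C : Fin m → ℝ)
    {c : ℝ} (hc : c ≠ 0) : Measure.pi μ {a | C ⬝ᵥ a = c} = 0 := by
  induction m with
  | zero => simp [Ne.symm hc]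
  | succ m ih =>
    refine Measure.pi_eq_zero_of_ae_cons μ
      (measurableSet_eq_fun (by fun_prop) measurable_const) ?_
    have hrest := ih (fun j => μ j.succ) (fun j => hμ j.succ) (fun j => C j.succ)
    filter_upwards [measure_eq_zero_iff_ae_notMem.1 hrest] with y hy
    have hslice :
        {x | C ⬝ᵥ Fin.cons x y = c} = {x | C 0 * x = c - (fun j => C j.succ) ⬝ᵥ y} := by
      ext x
      simp [dotProduct, Fin.sum_univ_succ, eq_sub_iff_add_eq]
    rw [hslice]
    exact measure_setOf_mul_eq_eq_zero (hμ 0) (C 0) (sub_ne_zero.2 (Ne.symm hy))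

theorem Matrix.det_of_cons_eq_dotProduct {R : Type*} [CommRing R] {m : ℕ}
    (a : Fin (m + 1) → R) (B : Fin m → Fin (m + 1) → R) :
    (Matrix.of (Fin.cons a B)).det
      = (fun j : Fin (m + 1) =>
          (-1) ^ (j : ℕ) * (Matrix.of fun i k => B i (j.succAbove k)).det) ⬝ᵥ a := by
  rw [Matrix.det_succ_row_zero, dotProduct]
  refine Finset.sum_congr rfl fun j _ => ?_
  rw [Matrix.of_apply, Fin.cons_zero, mul_right_comm]
  -- the rows `Fin.succ i` of `Fin.cons a B` are `B i` by definition
  rfl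

/-- If the entries of a random `n × n` real matrix are independent,
each with a law that is atomless off `0`, then `det A = c` has probability `0`
for every nonzero real `c`. -/
theorem det_eq_nonzero_const_prob_zero
    (n : ℕ) (hn : 1 ≤ n) (c : ℝ) (hc : c ≠ 0)
    (μ : Fin n → Fin n → Measure ℝ)
    [∀ i j, IsProbabilityMeasure (μ i j)]
    (hatomless : ∀ i j, ∀ x : ℝ, x ≠ 0 → μ i j {x} = 0) :
    Measure.pi (fun i => Measure.pi (fun j => μ i j))
      {A : Fin n → Fin n → ℝ | (Matrix.of A).det = c} = 0 := by
  obtain ⟨m, rfl⟩ : ∃ m, n = m + 1 := ⟨n - 1, by omega⟩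
  refine Measure.pi_eq_zero_of_ae_cons _
    (measurableSet_eq_fun (Continuous.measurable (by fun_prop)) measurable_const)
    (.of_forall fun B => ?_)
  simp only [Set.mem_ofPred_eq, Matrix.det_of_cons_eq_dotProduct]
  exact measure_pi_setOf_dotProduct_eq_eq_zero _ (hatomless 0) _ hc
end

section
/- Let n ≥ 1. If A is an n×n random real matrix whose entries A_ij are independent, each distributed according to a Borel probability measure μ_ij on ℝ that is atomless off 0, then the probability of the event {det A = 0 and there exists a permutation σ of {1,…,n} with ∏_{i=1}^n A_{σ(i),i} ≠ 0} is 0. -/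
/-!
Split the event according to a permutation `σ` whose term is nonzero. Permuting the rows by `σ`
moves the entries `A (σ i) i` to the diagonal, so it suffices to treat `σ = 1`. For fixed
off-diagonal entries, `det A` is a polynomial in the diagonal entries, and not the zero polynomial:
setting every diagonal entry equal to `X` turns it into a characteristic polynomial, which is monic.
Finally, a nonzero polynomial in independent variables that are atomless off `0` vanishes with
probability `0` while all variables are nonzero: view it as a polynomial in one variable `t` over the
others; where its leading coefficient does not vanish only finitely many `t` are roots, and the
points where the leading coefficient does vanish form a null set by induction on the number of
variables.
-/

open MeasureTheory

theorem Polynomial.measure_nonzero_roots_eq_zero {μ : Measure ℝ}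
    (hμ : ∀ x, x ≠ 0 → μ {x} = 0) {p : Polynomial ℝ} (hp : p ≠ 0) :
    μ {t | p.eval t = 0 ∧ t ≠ 0} = 0 := by
  refine measure_mono_null (t := ⋃ x ∈ p.roots.toFinset.erase 0, {x}) ?_ ?_
  · rintro t ⟨ht, ht0⟩
    simp [hp, ht, ht0]
  · exact (measure_biUnion_null_iff (Finset.countable_toSet _)).2
      fun x hx => hμ x (Finset.ne_of_mem_erase hx)

namespace MvPolynomial

variable {ι : Type*}

def zeroSetOffAxes (p : MvPolynomial ι ℝ) : Set (ι → ℝ) :=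
  {x | eval x p = 0 ∧ ∀ i, x i ≠ 0}

theorem measurableSet_zeroSetOffAxes [Countable ι] (p : MvPolynomial ι ℝ) :
    MeasurableSet (zeroSetOffAxes p) := by
  have := (continuous_eval p).measurable
  unfold zeroSetOffAxes
  measurability

theorem measure_pi_zeroSetOffAxes_rename {α β : Type*} [Fintype α] [Fintype β] (e : α ≃ β)
    (μ : β → Measure ℝ) [∀ i, SigmaFinite (μ i)] (p : MvPolynomial β ℝ) :
    Measure.pi (fun a => μ (e a)) (zeroSetOffAxes (rename e.symm p)) =
      Measure.pi μ (zeroSetOffAxes p) := by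
  rw [← (measurePreserving_piCongrLeft μ e).measure_preimage_equiv]
  congr 1
  ext x
  have hx : (MeasurableEquiv.piCongrLeft (fun _ => ℝ) e x : β → ℝ) = x ∘ e.symm := by
    ext b
    simp [MeasurableEquiv.coe_piCongrLeft, Equiv.piCongrLeft_apply_eq_cast]
  simp only [zeroSetOffAxes, Set.mem_preimage, Set.mem_ofPred_eq, hx, eval_rename]
  exact and_congr_right fun _ => (e.symm.forall_congr_right (q := fun a => x a ≠ 0)).symm

theorem measure_pi_zeroSetOffAxes_eq_zero_of_leadingCoeff [Fintype ι]
    (μ : Option ι → Measure ℝ) [∀ i, SigmaFinite (μ i)] (hμ : ∀ x, x ≠ 0 → μ none {x} = 0)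
    {p : MvPolynomial (Option ι) ℝ}
    (hlead : Measure.pi (fun i => μ (some i))
      (zeroSetOffAxes (optionEquivLeft ℝ ι p).leadingCoeff) = 0) :
    Measure.pi μ (zeroSetOffAxes p) = 0 := by
  set q := optionEquivLeft ℝ ι p
  rw [← Measure.pi_map_piOptionEquivProd μ, MeasurableEquiv.map_apply,
    Measure.measure_prod_null ((measurableSet_zeroSetOffAxes p).preimage
      (MeasurableEquiv.measurable _))]
  filter_upwards [measure_eq_zero_iff_ae_notMem.1 hlead] with y hy
  by_cases hqy : eval y q.leadingCoeff = 0
  · obtain ⟨i, hi⟩ : ∃ i, y i = 0 := by simpa [zeroSetOffAxes, hqy] using hy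
    exact measure_mono_null (fun t ht => ht.2 (some i) hi) measure_empty
  · refine measure_mono_null ?_
      (Polynomial.measure_nonzero_roots_eq_zero hμ (p := q.map (eval y)) ?_)
    · rintro t ⟨ht, hne⟩
      refine ⟨?_, hne none⟩
      have hyt : (MeasurableEquiv.piOptionEquivProd fun _ => ℝ).symm (y, t) =
          fun o => o.elim t y := by
        ext (_ | i) <;> rfl
      rwa [hyt, optionEquivLeft_elim_eval] at ht
    · intro h0
      exact hqy (by simpa using congrArg (Polynomial.coeff · q.natDegree) h0)

theorem measure_pi_zeroSetOffAxes_eq_zero [Fintype ι]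
    (μ : ι → Measure ℝ) [∀ i, SigmaFinite (μ i)] (hμ : ∀ i x, x ≠ 0 → μ i {x} = 0)
    {p : MvPolynomial ι ℝ} (hp : p ≠ 0) :
    Measure.pi μ (zeroSetOffAxes p) = 0 := by
  revert μ p
  refine @Fintype.induction_empty_option
    (fun ι _ => ∀ (μ : ι → Measure ℝ) [∀ i, SigmaFinite (μ i)],
      (∀ i x, x ≠ 0 → μ i {x} = 0) → ∀ {p : MvPolynomial ι ℝ}, p ≠ 0 →
        Measure.pi μ (zeroSetOffAxes p) = 0) ?_ ?_ ?_ ι _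
  · intro α β _ e ih μ _ hμ p hp
    let := Fintype.ofEquiv _ e.symm
    rw [← measure_pi_zeroSetOffAxes_rename e]
    exact ih _ (fun a => hμ (e a)) ((rename_injective _ e.symm.injective).ne_iff.2 hp)
  · intro μ _ _ p hp
    obtain ⟨x₀, hx₀⟩ : ∃ x, eval x p ≠ 0 := by
      by_contra! h
      exact hp (funext (by simpa using h))
    refine measure_mono_null (fun x hx => hx₀ ?_) measure_empty
    simpa [Subsingleton.elim x₀ x] using hx.1
  · intro α _ ih μ _ hμ p hp
    refine measure_pi_zeroSetOffAxes_eq_zero_of_leadingCoeff μ (hμ none)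
      (ih _ (fun a => hμ (some a)) ?_)
    simpa using hp

end MvPolynomial

theorem MeasureTheory.measurePreserving_curry_symm {ι κ X : Type*} [Fintype ι] [Fintype κ]
    [MeasurableSpace X] (μ : ι → κ → Measure X) [∀ i j, IsProbabilityMeasure (μ i j)] :
    MeasurePreserving (MeasurableEquiv.curry ι κ X).symm
      (Measure.pi fun i => Measure.pi fun j => μ i j) (Measure.pi fun p : ι × κ => μ p.1 p.2) := by
  refine ⟨MeasurableEquiv.measurable _, ?_⟩
  simpa only [Measure.infinitePi_eq_pi] using Measure.infinitePi_map_curry_symm μ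

namespace Matrix

variable {m : Type*} [DecidableEq m]

def ofDiagOffDiag {α : Type*} (d : {q : m × m // q.1 = q.2} → α)
    (o : {q : m × m // q.1 ≠ q.2} → α) : Matrix m m α :=
  of fun r c => if h : r = c then d ⟨(r, c), h⟩ else o ⟨(r, c), h⟩

theorem map_ofDiagOffDiag {α β : Type*} (d : {q : m × m // q.1 = q.2} → α)
    (o : {q : m × m // q.1 ≠ q.2} → α) (f : α → β) :
    (ofDiagOffDiag d o).map f = ofDiagOffDiag (f ∘ d) (f ∘ o) := by
  ext r c
  by_cases h : r = c <;> simp [ofDiagOffDiag, h]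

theorem ofDiagOffDiag_restrict {α : Type*} (A : m → m → α) :
    ofDiagOffDiag (fun q => A q.1.1 q.1.2) (fun q => A q.1.1 q.1.2) = of A := by
  ext r c
  by_cases h : r = c <;> simp [ofDiagOffDiag, h]

variable [Fintype m] {R : Type*} [CommRing R]

theorem det_ofDiagOffDiag_X_ne_zero [Nontrivial R] (o : {q : m × m // q.1 ≠ q.2} → R) :
    (ofDiagOffDiag MvPolynomial.X (MvPolynomial.C ∘ o)).det ≠ 0 := by
  have hchar : MvPolynomial.aeval (fun _ => Polynomial.X)
      (ofDiagOffDiag MvPolynomial.X (MvPolynomial.C ∘ o)).det = (ofDiagOffDiag 0 (-o)).charpoly := by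
    rw [AlgHom.map_det, charpoly]
    congr 1
    ext r c
    by_cases h : r = c <;> simp [ofDiagOffDiag, h]
  exact ne_zero_of_map (hchar ▸ (charpoly_monic _).ne_zero)

theorem eval_det_ofDiagOffDiag_X (o : {q : m × m // q.1 ≠ q.2} → R)
    (x : {q : m × m // q.1 = q.2} → R) :
    MvPolynomial.eval x (ofDiagOffDiag MvPolynomial.X (MvPolynomial.C ∘ o)).det =
      (ofDiagOffDiag x o).det := by
  rw [RingHom.map_det, RingHom.mapMatrix_apply, map_ofDiagOffDiag]
  congr 2 <;> ext <;> simp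

end Matrix

open Matrix in
theorem measure_pi_det_eq_zero_and_diag_ne_zero {m : Type*} [Fintype m] [DecidableEq m]
    (μ : m → m → Measure ℝ) [∀ i j, IsProbabilityMeasure (μ i j)]
    (hμ : ∀ i x, x ≠ 0 → μ i i {x} = 0) :
    Measure.pi (fun i => Measure.pi (fun j => μ i j))
      {A : m → m → ℝ | (of A).det = 0 ∧ ∀ i, A i i ≠ 0} = 0 := by
  let split := (MeasurableEquiv.curry m m ℝ).symm.trans
    (MeasurableEquiv.piEquivPiSubtypeProd (fun _ => ℝ) fun q : m × m => q.1 = q.2)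
  have hsplit : MeasurePreserving split _ _ :=
    (measurePreserving_piEquivPiSubtypeProd (fun q : m × m => μ q.1 q.2)
      (fun q : m × m => q.1 = q.2)).comp (measurePreserving_curry_symm μ)
  let F : Set (({q : m × m // q.1 = q.2} → ℝ) × ({q : m × m // q.1 ≠ q.2} → ℝ)) :=
    {z | (ofDiagOffDiag z.1 z.2).det = 0 ∧ ∀ i, z.1 i ≠ 0}
  have hF : MeasurableSet F := by
    have : Continuous fun z : ({q : m × m // q.1 = q.2} → ℝ) × ({q : m × m // q.1 ≠ q.2} → ℝ) =>
        (ofDiagOffDiag z.1 z.2).det := by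
      refine Continuous.matrix_det (continuous_matrix fun r c => ?_)
      by_cases h : r = c <;> simp only [ofDiagOffDiag, of_apply, h, dite_true, dite_false] <;>
        fun_prop
    have := this.measurable
    measurability
  have hpre : {A : m → m → ℝ | (of A).det = 0 ∧ ∀ i, A i i ≠ 0} = split ⁻¹' F := by
    ext A
    refine and_congr (by rw [← ofDiagOffDiag_restrict A]; rfl)
      ⟨fun h q => ?_, fun h i => h ⟨(i, i), rfl⟩⟩
    obtain ⟨⟨i, j⟩, hij : i = j⟩ := q
    subst hij
    exact h i
  have hslice (o : {q : m × m // q.1 ≠ q.2} → ℝ) : (fun x => (x, o)) ⁻¹' F =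
      MvPolynomial.zeroSetOffAxes (ofDiagOffDiag MvPolynomial.X (MvPolynomial.C ∘ o)).det := by
    ext x
    simp [F, MvPolynomial.zeroSetOffAxes, eval_det_ofDiagOffDiag_X]
  have hdiag (q : {q : m × m // q.1 = q.2}) x (hx : x ≠ 0) : μ q.1.1 q.1.2 {x} = 0 := by
    obtain ⟨⟨i, j⟩, hij : i = j⟩ := q
    subst hij
    exact hμ i x hx
  rw [hpre, hsplit.measure_preimage_equiv, Measure.prod_apply_symm hF]
  simp_rw [hslice, MvPolynomial.measure_pi_zeroSetOffAxes_eq_zero _ hdiag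
    (det_ofDiagOffDiag_X_ne_zero _), lintegral_zero]

open Matrix in
theorem measure_pi_det_eq_zero_and_perm_ne_zero {m : Type*} [Fintype m] [DecidableEq m]
    (μ : m → m → Measure ℝ) [∀ i j, IsProbabilityMeasure (μ i j)] (σ : Equiv.Perm m)
    (hμ : ∀ i x, x ≠ 0 → μ (σ i) i {x} = 0) :
    Measure.pi (fun i => Measure.pi (fun j => μ i j))
      {A : m → m → ℝ | (of A).det = 0 ∧ ∀ i, A (σ i) i ≠ 0} = 0 := by
  have hrows := (measurePreserving_piCongrLeft (fun i => Measure.pi fun j => μ i j) σ).symm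
  have hpre : {A : m → m → ℝ | (of A).det = 0 ∧ ∀ i, A (σ i) i ≠ 0} =
      (MeasurableEquiv.piCongrLeft (fun _ => m → ℝ) σ).symm ⁻¹'
        {B | (of B).det = 0 ∧ ∀ i, B i i ≠ 0} := by
    ext A
    have hA : (MeasurableEquiv.piCongrLeft (fun _ => m → ℝ) σ).symm A = fun r => A (σ r) := rfl
    have hdet : (of fun r => A (σ r)).det = Equiv.Perm.sign σ * (of A).det :=
      det_permute σ (of A)
    simp [hA, hdet]
  rw [hpre, hrows.measure_preimage_equiv]
  exact measure_pi_det_eq_zero_and_diag_ne_zero (fun r j => μ (σ r) j) hμ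

theorem det_zero_with_nonzero_term_prob_zero_general
    (n : ℕ)
    (μ : Fin n → Fin n → Measure ℝ)
    [∀ i j, IsProbabilityMeasure (μ i j)]
    (hatomless : ∀ i j, ∀ x : ℝ, x ≠ 0 → μ i j {x} = 0) :
    Measure.pi (fun i => Measure.pi (fun j => μ i j))
      {A : Fin n → Fin n → ℝ | (Matrix.of A).det = 0 ∧
        ∃ σ : Equiv.Perm (Fin n), (∏ i, A (σ i) i) ≠ 0} = 0 := by
  have hunion : {A : Fin n → Fin n → ℝ | (Matrix.of A).det = 0 ∧
      ∃ σ : Equiv.Perm (Fin n), (∏ i, A (σ i) i) ≠ 0} =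
        ⋃ σ : Equiv.Perm (Fin n), {A | (Matrix.of A).det = 0 ∧ ∀ i, A (σ i) i ≠ 0} := by
    ext A
    simp [Finset.prod_ne_zero_iff]
  rw [hunion]
  exact measure_iUnion_null fun σ =>
    measure_pi_det_eq_zero_and_perm_ne_zero μ σ fun i => hatomless (σ i) i

/-- For a random `n × n` real matrix with independent entries whose laws
are atomless off `0`, the event that `det A = 0` while some term of the permutation
expansion of the determinant is nonzero has probability `0`. -/
theorem det_zero_with_nonzero_term_prob_zero
    (n : ℕ) (hn : 1 ≤ n)
    (μ : Fin n → Fin n → Measure ℝ)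
    [∀ i j, IsProbabilityMeasure (μ i j)]
    (hatomless : ∀ i j, ∀ x : ℝ, x ≠ 0 → μ i j {x} = 0) :
    Measure.pi (fun i => Measure.pi (fun j => μ i j))
      {A : Fin n → Fin n → ℝ | (Matrix.of A).det = 0 ∧
        ∃ σ : Equiv.Perm (Fin n), (∏ i, A (σ i) i) ≠ 0} = 0 :=
  det_zero_with_nonzero_term_prob_zero_general n μ hatomless
end

section
/- Let n ≥ 1 and let c be a nonzero real number. If B is an n×n random real matrix whose diagonal entries B_ii for i ≠ 1 are fixed equal to 1 and whose remaining entries (all off-diagonal entries together with the entry B_11) are independent, each distributed according to a Borel probability measure on ℝ that is atomless off 0, then P(det B = c) = 0. -/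
open MeasureTheory

/-!
Expanding `det B` along the first row writes it as `∑ j, C j * B 0 j`, where the cofactors `C j`
depend only on the other rows. By Fubini it therefore suffices that every affine hyperplane
`{r | ∑ j, a j * r j = c}` with `c ≠ 0` is null for a product of laws atomless off `0`.
Peel off one coordinate: the remaining right-hand side `c - a 0 * r 0` vanishes only at the point
`r 0 = c / a 0 ≠ 0`, which carries no mass, so it is almost surely nonzero and induction applies.
-/

def AtomlessOffZero (μ : Measure ℝ) : Prop :=
  ∀ x : ℝ, x ≠ 0 → μ {x} = 0

theorem AtomlessOffZero.measure_setOf_mul_eq {μ : Measure ℝ} (hμ : AtomlessOffZero μ)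
    (a : ℝ) {c : ℝ} (hc : c ≠ 0) : μ {x | a * x = c} = 0 := by
  rcases eq_or_ne a 0 with rfl | ha
  · simp [hc.symm]
  · have : {x | a * x = c} = {c / a} := by
      ext x
      rw [Set.mem_singleton_iff, eq_div_iff ha, mul_comm]
      rfl
    rw [this]
    exact hμ _ (div_ne_zero hc ha)

theorem measurable_finCons {α : Type*} [MeasurableSpace α] {n : ℕ} :
    Measurable fun p : α × (Fin n → α) => (Fin.cons p.1 p.2 : Fin (n + 1) → α) :=
  measurable_pi_iff.2 fun i => Fin.cases measurable_fst
    (fun j => (measurable_pi_apply j).comp measurable_snd) i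

namespace MeasureTheory.Measure

variable {α : Type*} [MeasurableSpace α] {n : ℕ} (ν : Fin (n + 1) → Measure α)
  [∀ i, SigmaFinite (ν i)]

theorem pi_fin_succ_apply (S : Set (Fin (n + 1) → α)) :
    Measure.pi ν S =
      ((ν 0).prod (Measure.pi fun i => ν i.succ)) ((fun p => Fin.cons p.1 p.2) ⁻¹' S) := by
  have h := (measurePreserving_piFinSuccAbove ν 0).symm.measure_preimage_equiv S
  simp only [Fin.succAbove_zero, MeasurableEquiv.piFinSuccAbove_symm_apply] at h
  rw [← h]
  congr with ⟨x, y⟩ : 2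
  simp

theorem pi_fin_succ_null_of_ae_tail_null {S : Set (Fin (n + 1) → α)} (hS : MeasurableSet S)
    (h : ∀ᵐ x ∂ν 0, Measure.pi (fun i => ν i.succ) {y | Fin.cons x y ∈ S} = 0) :
    Measure.pi ν S = 0 := by
  rw [pi_fin_succ_apply, measure_prod_null (hS.preimage measurable_finCons)]
  exact h

theorem pi_fin_succ_null_of_ae_head_null {S : Set (Fin (n + 1) → α)} (hS : MeasurableSet S)
    (h : ∀ᵐ y ∂Measure.pi (fun i => ν i.succ), ν 0 {x | Fin.cons x y ∈ S} = 0) :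
    Measure.pi ν S = 0 := by
  rw [pi_fin_succ_apply, prod_apply_symm (hS.preimage measurable_finCons),
    lintegral_eq_zero_iff]
  · exact h
  · exact measurable_measure_prodMk_right (hS.preimage measurable_finCons)

end MeasureTheory.Measure

theorem Matrix.det_of_cons {R : Type*} [CommRing R] {n : ℕ} (x : Fin (n + 1) → R)
    (y : Fin n → Fin (n + 1) → R) :
    (Matrix.of (Fin.cons x y : Fin (n + 1) → Fin (n + 1) → R)).det =
      ∑ j : Fin (n + 1), (-1) ^ (j : ℕ) * ((Matrix.of y).submatrix id j.succAbove).det * x j := by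
  rw [Matrix.det_succ_row_zero]
  refine Finset.sum_congr rfl fun j _ => ?_
  rw [mul_right_comm]
  rfl

theorem pi_setOf_sum_mul_eq_null {n : ℕ} (ν : Fin n → Measure ℝ) [∀ j, SigmaFinite (ν j)]
    (hν : ∀ j, AtomlessOffZero (ν j)) (a : Fin n → ℝ) {c : ℝ} (hc : c ≠ 0) :
    Measure.pi ν {r | ∑ j, a j * r j = c} = 0 := by
  induction n generalizing c with
  | zero => simp [hc.symm]
  | succ m ih =>
    refine Measure.pi_fin_succ_null_of_ae_tail_null ν
      (measurableSet_eq_fun (by fun_prop) measurable_const) ?_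
    filter_upwards [measure_eq_zero_iff_ae_notMem.1 ((hν 0).measure_setOf_mul_eq (a 0) hc)]
      with x hx
    have hsection : {y : Fin m → ℝ | ∑ j, a j * (Fin.cons x y : Fin (m + 1) → ℝ) j = c} =
        {y | ∑ j, a j.succ * y j = c - a 0 * x} := by
      ext y
      simp only [Set.mem_ofPred_eq, Fin.sum_univ_succ, Fin.cons_zero, Fin.cons_succ]
      constructor <;> intro h <;> linarith
    rw [hsection]
    exact ih _ (fun j => hν j.succ) _ (sub_ne_zero.2 (Ne.symm hx))

theorem typeB_det_eq_nonzero_const_prob_zero_general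
    (n : ℕ) (hn : 1 ≤ n) (c : ℝ) (hc : c ≠ 0)
    (μ : Fin n → Fin n → Measure ℝ)
    [∀ i j, IsProbabilityMeasure (μ i j)]
    (hatomless : ∀ i j : Fin n, (i ≠ j ∨ (i = ⟨0, hn⟩ ∧ j = ⟨0, hn⟩)) →
      ∀ x : ℝ, x ≠ 0 → μ i j {x} = 0) :
    Measure.pi (fun i => Measure.pi (fun j => μ i j))
      {B : Fin n → Fin n → ℝ | (Matrix.of B).det = c} = 0 := by
  obtain ⟨m, rfl⟩ : ∃ m, n = m + 1 := ⟨n - 1, by omega⟩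
  have hrow : ∀ j, AtomlessOffZero (μ 0 j) := by
    intro j
    by_cases hj : j = 0
    · exact hatomless 0 j (Or.inr ⟨rfl, hj⟩)
    · exact hatomless 0 j (Or.inl (Ne.symm hj))
  have hdet : Continuous fun B : Fin (m + 1) → Fin (m + 1) → ℝ => (Matrix.of B).det :=
    continuous_id.matrix_det
  refine Measure.pi_fin_succ_null_of_ae_head_null _
    (measurableSet_eq_fun hdet.measurable measurable_const) (ae_of_all _ fun y => ?_)
  simp only [Set.mem_ofPred_eq, Matrix.det_of_cons]
  exact pi_setOf_sum_mul_eq_null _ hrow _ hc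

/-- For a random `n × n` real matrix of type `B_n` — the diagonal entries
`B i i` for `i ≠ 1` are (almost surely) fixed equal to `1`, and the variable entries
(all off-diagonal entries together with `B 1 1`) are independent with laws that are
atomless off `0` — the probability that `det B = c` is `0` for every nonzero real `c`. -/
theorem typeB_det_eq_nonzero_const_prob_zero
    (n : ℕ) (hn : 1 ≤ n) (c : ℝ) (hc : c ≠ 0)
    (μ : Fin n → Fin n → Measure ℝ)
    [∀ i j, IsProbabilityMeasure (μ i j)]
    (hfixed : ∀ i : Fin n, i ≠ ⟨0, hn⟩ → μ i i = Measure.dirac 1)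
    (hatomless : ∀ i j : Fin n, (i ≠ j ∨ (i = ⟨0, hn⟩ ∧ j = ⟨0, hn⟩)) →
      ∀ x : ℝ, x ≠ 0 → μ i j {x} = 0) :
    Measure.pi (fun i => Measure.pi (fun j => μ i j))
      {B : Fin n → Fin n → ℝ | (Matrix.of B).det = c} = 0 :=
  typeB_det_eq_nonzero_const_prob_zero_general n hn c hc μ hatomless
end

section
/- Let n ≥ 1 and let c be a real number with c ≠ 1. If C is an n×n random real matrix whose diagonal entries are all fixed equal to 1 and whose off-diagonal entries are independent, each distributed according to a Borel probability measure on ℝ that is atomless off 0, then P(det C = c) = 0. -/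
/-!
Each entry of `C` has at most one atom, namely the corresponding entry of the identity
matrix, and `det C - c` is affine in each entry. Integrating out one entry shows that
replacing it by its atom can only increase the probability of `{det C = c}`: an affine
function of `t` that misses `c` at the atom takes the value `c` at most once, at a point
of measure zero. After replacing every entry, `C` becomes the identity, and `det 1 = 1 ≠ c`.
-/

open MeasureTheory Function

def IsAffineInCoord {ι R : Type*} [DecidableEq ι] [Add R] [Mul R] (f : (ι → R) → R) (k : ι) :
    Prop :=
  ∀ x, ∃ α β : R, ∀ t, f (update x k t) = α + t * β

lemma measure_setOf_add_mul_eq_eq_zero {ν : Measure ℝ} {v : ℝ} (hν : ∀ t, t ≠ v → ν {t} = 0)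
    {α β c : ℝ} (hv : α + v * β ≠ c) : ν {t | α + t * β = c} = 0 := by
  have hsub : {t | α + t * β = c}.Subsingleton := by
    intro s hs t ht
    by_contra hst
    have hβ : β = 0 := by
      have : (s - t) * β = 0 := by simp only [Set.mem_ofPred_eq] at hs ht; linarith
      exact (mul_eq_zero.mp this).resolve_left (sub_ne_zero.mpr hst)
    simp only [Set.mem_ofPred_eq, hβ, mul_zero] at hs hv
    exact hv hs
  rcases hsub.eq_empty_or_singleton with h | ⟨t, h⟩
  · simp [h]
  · have hvt : v ∉ {t | α + t * β = c} := hv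
    rw [h] at hvt ⊢
    exact hν t fun htv => hvt htv.symm

lemma measure_pi_le_of_measure_update_le {ι : Type*} [Fintype ι] [DecidableEq ι]
    {X : ι → Type*} [∀ i, MeasurableSpace (X i)] (μ : ∀ i, Measure (X i))
    [∀ i, SigmaFinite (μ i)] {A B : Set (∀ i, X i)} (hA : MeasurableSet A)
    (hB : MeasurableSet B) (k : ι)
    (h : ∀ x, μ k {t | update x k t ∈ A} ≤ μ k {t | update x k t ∈ B}) :
    Measure.pi μ A ≤ Measure.pi μ B := by
  rw [← lintegral_indicator_one hA, ← lintegral_indicator_one hB]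
  refine lintegral_le_of_lmarginal_le {k} (measurable_one.indicator hA)
    (measurable_one.indicator hB) fun x => ?_
  simp only [lmarginal_singleton]
  have hsec : ∀ (S : Set (∀ i, X i)), MeasurableSet S →
      ∫⁻ t, S.indicator 1 (update x k t) ∂μ k = μ k {t | update x k t ∈ S} := fun S hS =>
    lintegral_indicator_one ((measurable_update x) hS)
  rw [hsec A hA, hsec B hB]
  exact h x

section

variable {ι : Type*} [Fintype ι] [DecidableEq ι] (ν : ι → Measure ℝ) [∀ i, SigmaFinite (ν i)]
  {f : (ι → ℝ) → ℝ} (c : ℝ)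

lemma measure_pi_level_le_level_update (hf : Measurable f) {k : ι} (hfk : IsAffineInCoord f k)
    {v : ℝ} (hν : ∀ t, t ≠ v → ν k {t} = 0) :
    Measure.pi ν {x | f x = c} ≤ Measure.pi ν {x | f (update x k v) = c} := by
  refine measure_pi_le_of_measure_update_le ν (measurableSet_eq_fun hf measurable_const)
    (measurableSet_eq_fun (hf.comp measurable_update_left) measurable_const) k fun x => ?_
  obtain ⟨α, β, hαβ⟩ := hfk x
  simp only [Set.mem_ofPred_eq, update_idem, hαβ]
  by_cases hv : α + v * β = c
  · simpa [hv] using measure_mono (Set.subset_univ _)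
  · rw [measure_setOf_add_mul_eq_eq_zero hν hv]
    exact zero_le

lemma measure_pi_level_le_level_piecewise (hf : Measurable f) (hfa : ∀ k, IsAffineInCoord f k)
    (a : ι → ℝ) (hν : ∀ i t, t ≠ a i → ν i {t} = 0) (s : Finset ι) :
    Measure.pi ν {x | f x = c} ≤ Measure.pi ν {x | f (s.piecewise a x) = c} := by
  induction s using Finset.induction with
  | empty => simp
  | @insert k s hk ih =>
    refine ih.trans ?_
    have hg : Measurable fun x => f (s.piecewise a x) :=
      hf.comp <| measurable_pi_lambda _ fun i => by
        by_cases hi : i ∈ s <;> simp [hi, measurable_pi_apply]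
    have hgk : IsAffineInCoord (fun x => f (s.piecewise a x)) k := fun x => by
      obtain ⟨α, β, hαβ⟩ := hfa k (s.piecewise a x)
      exact ⟨α, β, fun t => by simp only [← s.update_piecewise_of_notMem a _ hk, hαβ]⟩
    simpa only [Finset.piecewise_insert, s.update_piecewise_of_notMem a _ hk]
      using measure_pi_level_le_level_update ν c hg hgk (hν k)

theorem measure_pi_level_eq_zero_of_isAffineInCoord (hf : Measurable f)
    (hfa : ∀ k, IsAffineInCoord f k) (a : ι → ℝ) (hν : ∀ i t, t ≠ a i → ν i {t} = 0)
    (hc : f a ≠ c) : Measure.pi ν {x | f x = c} = 0 := by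
  have := measure_pi_level_le_level_piecewise ν c hf hfa a hν Finset.univ
  simpa [Finset.piecewise_univ, hc] using this

end

lemma isAffineInCoord_det_of_curry {n R : Type*} [Fintype n] [DecidableEq n] [CommRing R]
    (p : n × n) : IsAffineInCoord (fun x : n × n → R => (Matrix.of (curry x)).det) p := by
  intro x
  obtain ⟨i, j⟩ := p
  set M := Matrix.of (curry x)
  refine ⟨(M.updateRow i (update (M i) j 0)).det, (M.updateRow i (Pi.single j 1)).det,
    fun t => ?_⟩
  have hrow : update (M i) j t = update (M i) j 0 + t • Pi.single j 1 := by
    ext l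
    by_cases hl : l = j <;> simp [hl]
  have hM : Matrix.of (curry (update x (i, j) t)) = M.updateRow i (update (M i) j t) := by
    ext i' j'
    by_cases hi : i' = i <;> by_cases hj : j' = j <;>
      simp [M, Matrix.updateRow_apply, hi, hj, curry]
  show (Matrix.of (curry (update x (i, j) t))).det = _
  rw [hM, hrow, Matrix.det_updateRow_add, Matrix.det_updateRow_smul, mul_comm]

lemma MeasureTheory.Measure.pi_pi_eq_map_curry {ι κ X : Type*} [Fintype ι] [Fintype κ]
    [MeasurableSpace X] (μ : ι → κ → Measure X) [∀ i j, IsProbabilityMeasure (μ i j)] :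
    Measure.pi (fun i => Measure.pi (μ i)) =
      (Measure.pi fun p : ι × κ => μ p.1 p.2).map (MeasurableEquiv.curry ι κ X) := by
  simp_rw [← Measure.infinitePi_eq_pi]
  exact (Measure.infinitePi_map_curry μ).symm

theorem typeC_det_eq_const_ne_one_prob_zero_general
    (n : ℕ) (c : ℝ) (hc : c ≠ 1)
    (μ : Fin n → Fin n → Measure ℝ)
    [∀ i j, IsProbabilityMeasure (μ i j)]
    (hfixed : ∀ i : Fin n, μ i i = Measure.dirac 1)
    (hatomless : ∀ i j : Fin n, i ≠ j → ∀ x : ℝ, x ≠ 0 → μ i j {x} = 0) :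
    Measure.pi (fun i => Measure.pi (fun j => μ i j))
      {C : Fin n → Fin n → ℝ | (Matrix.of C).det = c} = 0 := by
  set a : Fin n × Fin n → ℝ := fun p => (1 : Matrix (Fin n) (Fin n) ℝ) p.1 p.2
  have hatom : ∀ p t, t ≠ a p → μ p.1 p.2 {t} = 0 := by
    rintro ⟨i, j⟩ t ht
    by_cases hij : i = j
    · subst hij
      rw [hfixed, Measure.dirac_apply, Set.indicator_of_notMem]
      simpa [a, eq_comm] using ht
    · exact hatomless i j hij t (by simpa [a, hij] using ht)
  have hdet : Measurable fun x : Fin n × Fin n → ℝ => (Matrix.of (curry x)).det :=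
    (Continuous.matrix_det (continuous_pi fun i => continuous_pi fun j =>
      continuous_apply (i, j))).measurable
  have ha : (Matrix.of (curry a)).det ≠ c := by
    rw [show Matrix.of (curry a) = 1 from rfl, Matrix.det_one]
    exact hc.symm
  rw [Measure.pi_pi_eq_map_curry, MeasurableEquiv.map_apply]
  exact measure_pi_level_eq_zero_of_isAffineInCoord _ c hdet isAffineInCoord_det_of_curry a
    hatom ha

/-- For a random `n × n` real matrix of type `C_n` — all diagonal entries
are (almost surely) fixed equal to `1`, and the off-diagonal entries are independent with
laws that are atomless off `0` — the probability that `det C = c` is `0` for every real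
`c ≠ 1`. -/
theorem typeC_det_eq_const_ne_one_prob_zero
    (n : ℕ) (hn : 1 ≤ n) (c : ℝ) (hc : c ≠ 1)
    (μ : Fin n → Fin n → Measure ℝ)
    [∀ i j, IsProbabilityMeasure (μ i j)]
    (hfixed : ∀ i : Fin n, μ i i = Measure.dirac 1)
    (hatomless : ∀ i j : Fin n, i ≠ j → ∀ x : ℝ, x ≠ 0 → μ i j {x} = 0) :
    Measure.pi (fun i => Measure.pi (fun j => μ i j))
      {C : Fin n → Fin n → ℝ | (Matrix.of C).det = c} = 0 :=
  typeC_det_eq_const_ne_one_prob_zero_general n c hc μ hfixed hatomless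
end

section
/- Let n ≥ 1. If A is an n×n random real matrix whose entries A_ij are independent, each distributed according to a Borel probability measure μ_ij on ℝ that is atomless off 0, then P(det A = 0) = P(per Ã = 0), where Ã is the indicator matrix of A. -/
/-!
Each term of `det A` is `± ∏ i, A (σ i) i`, so if every permutation `σ` meets a zero entry then
`det A = 0`; this is exactly the event `per Ã = 0`. Conversely, for a fixed `σ` the event
`det A = 0 ∧ ∀ i, A (σ i) i ≠ 0` is null. Permuting rows reduces to `σ = id`, and there one
conditions on all rows but the last: `det A` is affine in the last row `x`, and the coefficient
of its last entry is the leading principal minor, which is almost surely nonzero on the event by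
induction on the size. Then `det A = 0` pins the last entry to a single value, nonzero on the
event, hence of probability zero because the law of that entry is atomless off `0`.
-/

open MeasureTheory

/-- The indicator matrix of a real matrix: entry `1` where the entry is nonzero, `0` where
the entry is `0`. -/
noncomputable def indicatorMatrix {n : ℕ} (A : Matrix (Fin n) (Fin n) ℝ) :
    Matrix (Fin n) (Fin n) ℝ :=
  Matrix.of fun i j => if A i j = 0 then 0 else 1

namespace Matrix

open Finset

theorem permanent_indicatorMatrix {n : ℕ} (M : Matrix (Fin n) (Fin n) ℝ) :
    (indicatorMatrix M).permanent = #{σ : Equiv.Perm (Fin n) | ∀ i, M (σ i) i ≠ 0} := by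
  have hind : ∀ i j, indicatorMatrix M i j = if M i j ≠ 0 then 1 else 0 := fun i j ↦ by
    simp [indicatorMatrix, ite_not]
  simp only [permanent, hind, prod_boole, mem_univ, true_implies, sum_boole]

theorem det_eq_zero_of_forall_exists_apply_eq_zero {n R : Type*} [Fintype n] [DecidableEq n]
    [CommRing R] (M : Matrix n n R) (h : ∀ σ : Equiv.Perm n, ∃ i, M (σ i) i = 0) :
    M.det = 0 := by
  refine (det_apply M).trans (sum_eq_zero fun σ _ ↦ ?_)
  obtain ⟨i, hi⟩ := h σ
  rw [prod_eq_zero (f := fun j ↦ M (σ j) j) (mem_univ i) hi, smul_zero]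

theorem exists_det_of_snoc_eq_sum_mul {R : Type*} [CommRing R] {n : ℕ}
    (B : Fin n → Fin (n + 1) → R) :
    ∃ c : Fin (n + 1) → R, c (Fin.last n) = (of fun i j ↦ B i (Fin.castSucc j)).det ∧
      ∀ x, (of (Fin.snoc B x : Fin (n + 1) → Fin (n + 1) → R)).det = ∑ j, c j * x j := by
  refine ⟨fun j ↦ (-1) ^ (n + (j : ℕ)) * (of fun i l ↦ B i (j.succAbove l)).det, ?_, fun x ↦ ?_⟩
  · simp [Fin.succAbove_last, ← two_mul, pow_mul]
  · rw [det_succ_row _ (Fin.last n)]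
    refine sum_congr rfl fun j _ ↦ ?_
    simp only [of_apply, Fin.snoc_last, submatrix, Fin.succAbove_last, Fin.snoc_castSucc,
      Fin.val_last]
    ring

end Matrix

namespace MeasureTheory

variable {α : Type*} [MeasurableSpace α] {m : ℕ}

theorem Measure.pi_eq_zero_of_ae_snoc (ν : Fin (m + 1) → Measure α) [∀ i, SigmaFinite (ν i)]
    {S : Set (Fin (m + 1) → α)} (hS : MeasurableSet S)
    (h : ∀ᵐ y ∂Measure.pi (fun j ↦ ν (Fin.castSucc j)),
      ν (Fin.last m) {t | Fin.snoc y t ∈ S} = 0) :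
    Measure.pi ν S = 0 := by
  have hsplit := measurePreserving_piFinSuccAbove ν (Fin.last m)
  simp only [Fin.succAbove_last] at hsplit
  set e := MeasurableEquiv.piFinSuccAbove (fun _ ↦ α) (Fin.last m)
  have hsection : ∀ y t, e.symm (t, y) = Fin.snoc y t := fun y t ↦ Fin.insertNth_last' t y
  rw [← (hsplit.symm e).measure_preimage_equiv, Measure.prod_apply_symm (e.symm.measurable hS)]
  simp only [Set.preimage, Set.mem_ofPred_eq, hsection]
  exact (lintegral_congr_ae h).trans lintegral_zero

theorem measurePreserving_init (ν : Fin (m + 1) → Measure α) [∀ i, IsProbabilityMeasure (ν i)] :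
    MeasurePreserving (Fin.init : (Fin (m + 1) → α) → Fin m → α) (Measure.pi ν)
      (Measure.pi fun j ↦ ν (Fin.castSucc j)) := by
  have hsplit := measurePreserving_piFinSuccAbove ν (Fin.last m)
  simp only [Fin.succAbove_last] at hsplit
  convert measurePreserving_snd.comp hsplit
  ext q j
  simp [MeasurableEquiv.piFinSuccAbove]

theorem measure_sum_mul_eq_zero_and_last_ne_zero (ν : Fin (m + 1) → Measure ℝ)
    [∀ i, SigmaFinite (ν i)] (hν : ∀ x ≠ 0, ν (Fin.last m) {x} = 0) {c : Fin (m + 1) → ℝ}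
    (hc : c (Fin.last m) ≠ 0) :
    Measure.pi ν {x | ∑ j, c j * x j = 0 ∧ x (Fin.last m) ≠ 0} = 0 := by
  refine Measure.pi_eq_zero_of_ae_snoc ν (by measurability) (ae_of_all _ fun y ↦ ?_)
  set b := ∑ j : Fin m, c (Fin.castSucc j) * y j
  have hsection : {t | Fin.snoc y t ∈ {x : Fin (m + 1) → ℝ | ∑ j, c j * x j = 0 ∧
      x (Fin.last m) ≠ 0}} ⊆ {-b / c (Fin.last m)} \ {0} := by
    rintro t ⟨hsum, ht⟩
    simp only [Fin.sum_univ_castSucc, Fin.snoc_castSucc, Fin.snoc_last] at hsum ht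
    refine ⟨?_, ht⟩
    rw [Set.mem_singleton_iff, eq_div_iff hc]
    linarith
  refine measure_mono_null hsection ?_
  rcases eq_or_ne (-b / c (Fin.last m)) 0 with h0 | h0
  · simp [h0]
  · exact measure_mono_null Set.sdiff_subset (hν _ h0)

theorem measurableSet_det_eq_zero_and_diag_ne_zero :
    MeasurableSet {A : Fin m → Fin m → ℝ | (Matrix.of A).det = 0 ∧ ∀ i, A i i ≠ 0} := by
  simp only [Matrix.det_apply', Matrix.of_apply]
  measurability

theorem measure_det_eq_zero_and_diag_ne_zero (ν : Fin m → Fin m → Measure ℝ)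
    [∀ i j, IsProbabilityMeasure (ν i j)] (hν : ∀ i j, ∀ x ≠ 0, ν i j {x} = 0) :
    Measure.pi (fun i ↦ Measure.pi (ν i)) {A | (Matrix.of A).det = 0 ∧ ∀ i, A i i ≠ 0} = 0 := by
  induction m with
  | zero => simp
  | succ n ih =>
    refine Measure.pi_eq_zero_of_ae_snoc _ measurableSet_det_eq_zero_and_diag_ne_zero ?_
    have hblock : MeasurePreserving (fun (B : Fin n → Fin (n + 1) → ℝ) i ↦ Fin.init (B i))
        (Measure.pi fun i ↦ Measure.pi (ν (Fin.castSucc i)))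
        (Measure.pi fun i ↦ Measure.pi fun j ↦ ν (Fin.castSucc i) (Fin.castSucc j)) :=
      measurePreserving_pi _ _ fun i ↦ measurePreserving_init _
    have hblock_null := (hblock.measure_preimage
      measurableSet_det_eq_zero_and_diag_ne_zero.nullMeasurableSet).trans
      (ih (fun i j ↦ ν (Fin.castSucc i) (Fin.castSucc j)) fun i j ↦ hν _ _)
    filter_upwards [measure_eq_zero_iff_ae_notMem.mp hblock_null] with B hB
    obtain ⟨c, hc_last, hdet⟩ := Matrix.exists_det_of_snoc_eq_sum_mul B
    by_cases hdiag : ∀ i : Fin n, B i (Fin.castSucc i) ≠ 0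
    · refine measure_mono_null ?_ (measure_sum_mul_eq_zero_and_last_ne_zero
        (ν (Fin.last n)) (hν _ _) (hc_last ▸ fun h ↦ hB ⟨h, hdiag⟩))
      intro x hx
      exact ⟨hdet x ▸ hx.1, by simpa using hx.2 (Fin.last n)⟩
    · refine measure_mono_null (fun x hx ↦ hdiag fun i ↦ ?_) measure_empty
      simpa using hx.2 (Fin.castSucc i)

theorem measure_det_eq_zero_and_perm_diag_ne_zero (μ : Fin m → Fin m → Measure ℝ)
    [∀ i j, IsProbabilityMeasure (μ i j)] (hμ : ∀ i j, ∀ x ≠ 0, μ i j {x} = 0)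
    (σ : Equiv.Perm (Fin m)) :
    Measure.pi (fun i ↦ Measure.pi (μ i))
      {A | (Matrix.of A).det = 0 ∧ ∀ i, A (σ i) i ≠ 0} = 0 := by
  rw [← (measurePreserving_piCongrLeft (fun i ↦ Measure.pi (μ i)) σ).measure_preimage_equiv]
  convert measure_det_eq_zero_and_diag_ne_zero (fun i ↦ μ (σ i)) fun i j ↦ hμ _ _ using 2
  ext C
  have hrows : ∀ b, MeasurableEquiv.piCongrLeft (fun _ ↦ Fin m → ℝ) σ C b = C (σ.symm b) :=
    fun b ↦ by simp [MeasurableEquiv.coe_piCongrLeft, Equiv.piCongrLeft_apply]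
  have hdet : (Matrix.of (MeasurableEquiv.piCongrLeft (fun _ ↦ Fin m → ℝ) σ C)).det =
      Equiv.Perm.sign σ.symm * (Matrix.of C).det := by
    rw [← Matrix.det_permute]
    exact congrArg Matrix.det (funext hrows)
  simp [hdet, hrows]

end MeasureTheory

theorem typeA_prob_det_zero_eq_prob_permanent_indicator_zero_general
    (n : ℕ)
    (μ : Fin n → Fin n → Measure ℝ)
    [∀ i j, IsProbabilityMeasure (μ i j)]
    (hatomless : ∀ i j, ∀ x : ℝ, x ≠ 0 → μ i j {x} = 0) :
    Measure.pi (fun i => Measure.pi (fun j => μ i j))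
        {A : Fin n → Fin n → ℝ | (Matrix.of A).det = 0}
      = Measure.pi (fun i => Measure.pi (fun j => μ i j))
        {A : Fin n → Fin n → ℝ | (indicatorMatrix (Matrix.of A)).permanent = 0} := by
  have hper : {A : Fin n → Fin n → ℝ | (indicatorMatrix (Matrix.of A)).permanent = 0} =
      {A | ∀ σ : Equiv.Perm (Fin n), ∃ i, A (σ i) i = 0} := by
    ext A
    rw [Set.mem_ofPred_eq, Matrix.permanent_indicatorMatrix, Nat.cast_eq_zero, Finset.card_eq_zero,
      Finset.filter_eq_empty_iff]
    simp
  rw [hper]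
  refine (measure_eq_measure_of_null_sdiff
    (fun A hA ↦ Matrix.det_eq_zero_of_forall_exists_apply_eq_zero _ hA) ?_).symm
  refine measure_mono_null (fun A ⟨hdet, hA⟩ ↦ ?_) (measure_iUnion_null fun σ ↦
    measure_det_eq_zero_and_perm_diag_ne_zero μ hatomless σ)
  obtain ⟨σ, hσ⟩ := not_forall.mp hA
  exact Set.mem_iUnion.mpr ⟨σ, hdet, not_exists.mp hσ⟩

/-- For a random `n × n` real matrix with independent entries whose laws
are atomless off `0`, `P(det A = 0) = P(per Ã = 0)`, where `Ã` is the indicator matrix. -/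
theorem typeA_prob_det_zero_eq_prob_permanent_indicator_zero
    (n : ℕ) (hn : 1 ≤ n)
    (μ : Fin n → Fin n → Measure ℝ)
    [∀ i j, IsProbabilityMeasure (μ i j)]
    (hatomless : ∀ i j, ∀ x : ℝ, x ≠ 0 → μ i j {x} = 0) :
    Measure.pi (fun i => Measure.pi (fun j => μ i j))
        {A : Fin n → Fin n → ℝ | (Matrix.of A).det = 0}
      = Measure.pi (fun i => Measure.pi (fun j => μ i j))
        {A : Fin n → Fin n → ℝ | (indicatorMatrix (Matrix.of A)).permanent = 0} :=
  typeA_prob_det_zero_eq_prob_permanent_indicator_zero_general n μ hatomless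
end

section
/- Let n ≥ 1. If B is an n×n random real matrix whose diagonal entries B_ii for i ≠ 1 are fixed equal to 1 and whose remaining entries (all off-diagonal entries together with B_11) are independent, each distributed according to a Borel probability measure on ℝ that is atomless off 0, then P(det B = 0) = P(per B̃ = 0), where B̃ is the indicator matrix of B. -/
open MeasureTheory

/-!
Every term of `per B̃` vanishes exactly when the corresponding term of `det B` contains a zero
entry, so `per B̃ = 0` forces `det B = 0`. Conversely, fix the zero pattern `S` of `B`: then
`det B` is the value at `B` of the determinant of the matrix with the forced `1`s on the
diagonal, `0`s on `S` and independent indeterminates elsewhere. If `per B̃ ≠ 0`, some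
permutation avoids `S`, and since distinct permutations give distinct monomials this polynomial
is nonzero. A nonzero polynomial vanishes with probability zero at a point whose coordinates in
its variables are nonzero and independent with laws atomless off `0`: by induction on the number
of variables and Fubini, for almost every value of the other coordinates the leading coefficient
in the first one does not vanish, leaving a nonzero polynomial in one variable, whose finitely
many nonzero roots are null. There are finitely many patterns `S`.
-/

open MvPolynomial Equiv

theorem Polynomial.measure_setOf_ne_zero_isRoot {ν : Measure ℝ}
    (hν : ∀ x ≠ 0, ν {x} = 0) {P : Polynomial ℝ} (hP : P ≠ 0) :
    ν {t | t ≠ 0 ∧ P.IsRoot t} = 0 := by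
  have hfin : {t | t ≠ 0 ∧ P.IsRoot t}.Finite :=
    (finite_setOfPred_isRoot hP).subset fun _ ht => ht.2
  rw [← Set.biUnion_of_singleton {t | t ≠ 0 ∧ P.IsRoot t}]
  exact (measure_biUnion_null_iff hfin.countable).2 fun t ht => hν t ht.1

namespace MvPolynomial

variable {ι R : Type*} [CommRing R]

def torusZeroLocus (q : MvPolynomial ι R) : Set (ι → R) :=
  {x | eval x q = 0 ∧ ∀ i ∈ q.vars, x i ≠ 0}

theorem measurableSet_torusZeroLocus [Countable ι] (q : MvPolynomial ι ℝ) :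
    MeasurableSet (torusZeroLocus q) := by
  refine measurableSet_setOfPred.2 <| .and ?_ <| .forall fun i => .imp measurable_const ?_
  · exact measurableSet_setOfPred.1 ((continuous_eval q).measurable (measurableSet_singleton 0))
  · exact measurableSet_setOfPred.1 (measurable_pi_apply i (measurableSet_singleton 0)).compl

theorem succ_mem_vars_of_mem_vars_coeff_finSuccEquiv {m : ℕ} {q : MvPolynomial (Fin (m + 1)) R}
    {k : ℕ} {j : Fin m} (hj : j ∈ ((finSuccEquiv R m q).coeff k).vars) : j.succ ∈ q.vars := by
  rw [mem_vars_iff_degreeOf_ne_zero] at hj ⊢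
  exact (Nat.pos_of_ne_zero hj |>.trans_le (degreeOf_coeff_finSuccEquiv q j k)).ne'

theorem measure_setOf_cons_mem_torusZeroLocus_eq_zero {m : ℕ} {ν : Measure ℝ}
    {q : MvPolynomial (Fin (m + 1)) ℝ} (hν : 0 ∈ q.vars → ∀ x ≠ 0, ν {x} = 0)
    {w : Fin m → ℝ} (hw : eval w (finSuccEquiv ℝ m q).leadingCoeff ≠ 0) :
    ν {t | Fin.cons t w ∈ torusZeroLocus q} = 0 := by
  set P := (finSuccEquiv ℝ m q).map (eval w)
  have hP : P ≠ 0 := fun h => hw <| by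
    simpa [P] using congr_arg (Polynomial.coeff · (finSuccEquiv ℝ m q).natDegree) h
  have hroot : ∀ t, Fin.cons t w ∈ torusZeroLocus q → P.IsRoot t := fun t ht => by
    simpa [P, Polynomial.IsRoot, ← eval_eq_eval_mv_eval'] using ht.1
  by_cases h0 : 0 ∈ q.vars
  · refine measure_mono_null (fun t ht => ?_)
      (Polynomial.measure_setOf_ne_zero_isRoot (hν h0) hP)
    exact ⟨by simpa using ht.2 0 h0, hroot t ht⟩
  · have hdeg : P.natDegree = 0 := by
      refine Nat.eq_zero_of_le_zero (Polynomial.natDegree_map_le.trans ?_)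
      rw [natDegree_finSuccEquiv]
      simpa [mem_vars_iff_degreeOf_ne_zero] using h0
    convert measure_empty (μ := ν)
    refine Set.eq_empty_of_forall_notMem fun t ht => ?_
    exact (Polynomial.natDegree_pos_iff_degree_pos.2
      (Polynomial.degree_pos_of_root hP (hroot t ht))).ne' hdeg

theorem measure_torusZeroLocus_eq_zero_fin :
    ∀ {m : ℕ} (ν : Fin m → Measure ℝ) [∀ i, SigmaFinite (ν i)] {q : MvPolynomial (Fin m) ℝ},
      q ≠ 0 → (∀ i ∈ q.vars, ∀ x ≠ 0, ν i {x} = 0) → Measure.pi ν (torusZeroLocus q) = 0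
  | 0, ν, _, q, hq, _ => by
    obtain ⟨c, rfl⟩ := C_surjective (Fin 0) q
    convert measure_empty (μ := Measure.pi ν)
    exact Set.eq_empty_of_forall_notMem fun x hx => hq (by simpa using hx.1)
  | m + 1, ν, _, q, hq, hν => by
    set c := (finSuccEquiv ℝ m q).leadingCoeff
    have hc : c ≠ 0 := by simpa [c] using hq
    have hνc : ∀ j ∈ c.vars, ∀ x ≠ 0, ν (Fin.succAbove 0 j) {x} = 0 := fun j hj => by
      simpa using hν _ (succ_mem_vars_of_mem_vars_coeff_finSuccEquiv hj)
    have hae : ∀ᵐ w ∂Measure.pi (fun j => ν (Fin.succAbove 0 j)), w ∉ torusZeroLocus c :=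
      measure_eq_zero_iff_ae_notMem.1 (measure_torusZeroLocus_eq_zero_fin _ hc hνc)
    have hmp := (measurePreserving_piFinSuccAbove ν 0).symm
    rw [← hmp.measure_preimage_equiv, Measure.prod_apply_symm
      ((MeasurableEquiv.measurable _) (measurableSet_torusZeroLocus q))]
    refine (lintegral_congr_ae (hae.mono fun w hw => ?_)).trans lintegral_zero
    simp only [Set.preimage, MeasurableEquiv.piFinSuccAbove_symm_apply, Fin.insertNthEquiv_zero,
      Set.mem_ofPred_eq]
    by_cases hcw : eval w c = 0
    · convert measure_empty (μ := ν 0)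
      refine Set.eq_empty_of_forall_notMem fun t ht => hw ⟨hcw, fun j hj => ?_⟩
      simpa using ht.2 _ (succ_mem_vars_of_mem_vars_coeff_finSuccEquiv hj)
    · exact measure_setOf_cons_mem_torusZeroLocus_eq_zero (hν 0) hcw

theorem measure_torusZeroLocus_eq_zero [Fintype ι] (ν : ι → Measure ℝ) [∀ i, SigmaFinite (ν i)]
    {q : MvPolynomial ι ℝ} (hq : q ≠ 0) (hν : ∀ i ∈ q.vars, ∀ x ≠ 0, ν i {x} = 0) :
    Measure.pi ν (torusZeroLocus q) = 0 := by
  let e := Fintype.equivFin ι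
  rw [← (measurePreserving_piCongrLeft ν e.symm).measure_preimage_equiv]
  have hq' : rename e q ≠ 0 := (map_ne_zero_iff _ (rename_injective e e.injective)).2 hq
  refine measure_mono_null (fun y hy => ?_)
    (measure_torusZeroLocus_eq_zero_fin _ hq' fun k hk => ?_)
  · have hye : MeasurableEquiv.piCongrLeft (fun _ => ℝ) e.symm y = y ∘ e := by
      ext i
      simp [MeasurableEquiv.piCongrLeft, Equiv.piCongrLeft]
    rw [Set.mem_preimage, hye] at hy
    refine ⟨by rw [eval_rename, hy.1], fun k hk => ?_⟩
    obtain ⟨i, hi, rfl⟩ := Finset.mem_image.1 (vars_rename e q hk)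
    exact hy.2 i hi
  · obtain ⟨i, hi, rfl⟩ := Finset.mem_image.1 (vars_rename e q hk)
    simpa using hν i hi

end MvPolynomial

namespace MeasureTheory

variable {ι κ X : Type*} [Fintype ι] [Fintype κ] [MeasurableSpace X]

theorem measurePreserving_curry_symm_s6 (μ : ι → κ → Measure X)
    [∀ i j, IsProbabilityMeasure (μ i j)] :
    MeasurePreserving (MeasurableEquiv.curry ι κ X).symm
      (Measure.pi fun i => Measure.pi (μ i)) (Measure.pi fun p : ι × κ => μ p.1 p.2) :=
  ⟨MeasurableEquiv.measurable _, by
    simpa only [Measure.infinitePi_eq_pi] using Measure.infinitePi_map_curry_symm μ⟩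

theorem ae_pi_pi_apply_eq_of_eq_dirac [MeasurableSingletonClass X] (μ : ι → κ → Measure X)
    [∀ i j, SigmaFinite (μ i j)] {i : ι} {j : κ} {a : X} (h : μ i j = Measure.dirac a) :
    ∀ᵐ x ∂Measure.pi (fun i => Measure.pi (μ i)), x i j = a := by
  have hj : ∀ᵐ t ∂μ i j, t = a := by
    rw [h, ae_dirac_eq]
    exact Filter.eventually_pure.2 rfl
  exact (Measure.tendsto_eval_ae_ae (μ := fun i => Measure.pi (μ i))).eventually
    ((Measure.tendsto_eval_ae_ae (μ := μ i)).eventually hj)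

theorem ae_uncurry_notMem_torusZeroLocus (μ : ι → κ → Measure ℝ)
    [∀ i j, IsProbabilityMeasure (μ i j)] {q : MvPolynomial (ι × κ) ℝ} (hq : q ≠ 0)
    (hμ : ∀ p ∈ q.vars, ∀ x ≠ 0, μ p.1 p.2 {x} = 0) :
    ∀ᵐ x ∂Measure.pi (fun i => Measure.pi (μ i)), Function.uncurry x ∉ torusZeroLocus q := by
  have hnull := measure_torusZeroLocus_eq_zero (fun p => μ p.1 p.2) hq hμ
  rw [← (measurePreserving_curry_symm_s6 μ).measure_preimage_equiv] at hnull
  exact measure_eq_zero_iff_ae_notMem.1 hnull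

end MeasureTheory

theorem MvPolynomial.vars_det_subset {m σ R : Type*} [Fintype m] [DecidableEq m]
    [DecidableEq σ] [CommRing R] (A : Matrix m m (MvPolynomial σ R)) :
    A.det.vars ⊆ Finset.univ.biUnion fun p : m × m => (A p.1 p.2).vars := by
  rw [Matrix.det_apply]
  refine (vars_sum_subset _ _).trans (Finset.biUnion_subset.2 fun τ _ => ?_)
  have hsign : (Perm.sign τ • ∏ i, A (τ i) i).vars = (∏ i, A (τ i) i).vars := by
    rcases Int.units_eq_one_or (Perm.sign τ) with h | h <;> simp [h, vars_neg]
  rw [hsign]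
  refine (vars_prod _).trans (Finset.biUnion_subset.2 fun i _ => ?_)
  exact Finset.subset_biUnion_of_mem (fun p : m × m => (A p.1 p.2).vars)
    (Finset.mem_univ (τ i, i))

theorem Matrix.det_eq_zero_of_forall_exists_apply_eq_zero_s6 {m R : Type*} [Fintype m]
    [DecidableEq m] [CommRing R] {A : Matrix m m R} (h : ∀ σ : Perm m, ∃ i, A (σ i) i = 0) :
    A.det = 0 := by
  rw [Matrix.det_apply']
  refine Finset.sum_eq_zero fun σ _ => ?_
  obtain ⟨i, hi⟩ := h σ
  exact mul_eq_zero_of_right _ (Finset.prod_eq_zero (Finset.mem_univ i) hi)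

theorem permanent_indicatorMatrix_eq_zero_iff {n : ℕ} {A : Matrix (Fin n) (Fin n) ℝ} :
    (indicatorMatrix A).permanent = 0 ↔ ∀ σ : Perm (Fin n), ∃ i, A (σ i) i = 0 := by
  have hnonneg (σ : Perm (Fin n)) : 0 ≤ ∏ i, indicatorMatrix A (σ i) i :=
    Finset.prod_nonneg fun i _ => by
      simp only [indicatorMatrix, Matrix.of_apply]
      split_ifs <;> norm_num
  rw [Matrix.permanent, Finset.sum_eq_zero_iff_of_nonneg fun σ _ => hnonneg σ]
  simp [Finset.prod_eq_zero_iff, indicatorMatrix]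

section PatternMatrix

variable {m : Type*} [Fintype m] [DecidableEq m]

noncomputable def patternMatrix (R : Type*) [CommRing R] (F : Finset m) (S : Finset (m × m)) :
    Matrix m m (MvPolynomial (m × m) R) :=
  Matrix.of fun i j => if i = j ∧ j ∈ F then 1 else if (i, j) ∈ S then 0 else X (i, j)

def varCols (F : Finset m) (τ : Perm m) : Finset m :=
  Finset.univ.filter fun i => ¬(τ i = i ∧ i ∈ F)

noncomputable def permMonomial (F : Finset m) (τ : Perm m) : m × m →₀ ℕ :=
  ∑ i ∈ varCols F τ, Finsupp.single (τ i, i) 1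

theorem permMonomial_apply (F : Finset m) (τ : Perm m) (r i : m) :
    permMonomial F τ (r, i) = if i ∈ varCols F τ ∧ τ i = r then 1 else 0 := by
  simp only [permMonomial, Finsupp.finsetSum_apply, Finsupp.single_apply, Prod.ext_iff,
    and_comm, Finset.sum_boole, Finset.filter_and, Finset.filter_eq', Nat.cast_id]
  by_cases hi : i ∈ varCols F τ <;> by_cases hr : τ i = r <;> simp [hi, hr]

theorem apply_eq_of_permMonomial_eq {F : Finset m} {τ σ : Perm m}
    (h : permMonomial F τ = permMonomial F σ) {i : m} (hi : i ∈ varCols F τ) : σ i = τ i := by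
  have := congr_arg (· (τ i, i)) h
  simp only [permMonomial_apply, hi, true_and] at this
  by_contra hne
  exact one_ne_zero (this.trans (if_neg fun h' => hne h'.2))

theorem permMonomial_injective (F : Finset m) : Function.Injective (permMonomial F) := by
  intro τ σ h
  ext i
  by_cases hτ : i ∈ varCols F τ
  · exact (apply_eq_of_permMonomial_eq h hτ).symm
  by_cases hσ : i ∈ varCols F σ
  · exact apply_eq_of_permMonomial_eq h.symm hσ
  · simp only [varCols, Finset.mem_filter, Finset.mem_univ, true_and, not_not] at hτ hσ
    rw [hτ.1, hσ.1]

variable {R : Type*} [CommRing R]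

theorem prod_patternMatrix_perm (F : Finset m) (S : Finset (m × m)) (τ : Perm m) :
    ∏ i, patternMatrix R F S (τ i) i =
      if ∀ i ∈ varCols F τ, (τ i, i) ∉ S then monomial (permMonomial F τ) 1 else 0 := by
  have hentry : ∀ i, patternMatrix R F S (τ i) i =
      if i ∈ varCols F τ then (if (τ i, i) ∈ S then 0 else X (τ i, i)) else 1 := fun i => by
    by_cases h : τ i = i ∧ i ∈ F <;> simp [patternMatrix, varCols, h]
  simp only [hentry, Finset.prod_ite_mem, Finset.univ_inter]
  split_ifs with h
  · rw [permMonomial, monomial_sum_one]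
    exact Finset.prod_congr rfl fun i hi => if_neg (h i hi)
  · obtain ⟨i, hi, hS⟩ : ∃ i ∈ varCols F τ, (τ i, i) ∈ S := by simpa using h
    exact Finset.prod_eq_zero hi (if_pos hS)

theorem coeff_permMonomial_det_patternMatrix {F : Finset m} {S : Finset (m × m)} {σ : Perm m}
    (hσ : ∀ i, (σ i, i) ∉ S) :
    coeff (permMonomial F σ) (patternMatrix R F S).det = Perm.sign σ • 1 := by
  rw [Matrix.det_apply, coeff_sum, Finset.sum_eq_single σ]
  · rw [coeff_smul, prod_patternMatrix_perm, if_pos fun i _ => hσ i, coeff_monomial, if_pos rfl]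
  · intro τ _ hτ
    rw [coeff_smul, prod_patternMatrix_perm]
    split_ifs
    · rw [coeff_monomial, if_neg fun h => hτ (permMonomial_injective F h), smul_zero]
    · rw [coeff_zero, smul_zero]
  · exact fun h => absurd (Finset.mem_univ σ) h

theorem det_patternMatrix_ne_zero [Nontrivial R] {F : Finset m} {S : Finset (m × m)}
    {σ : Perm m} (hσ : ∀ i, (σ i, i) ∉ S) : (patternMatrix R F S).det ≠ 0 := fun h => by
  have := coeff_permMonomial_det_patternMatrix (R := R) (F := F) hσ
  rw [h, coeff_zero] at this
  rcases Int.units_eq_one_or (Perm.sign σ) with hs | hs <;> simp [hs] at this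

theorem vars_det_patternMatrix {F : Finset m} {S : Finset (m × m)} {p : m × m}
    (hp : p ∈ (patternMatrix R F S).det.vars) : p ∉ S ∧ ¬(p.1 = p.2 ∧ p.2 ∈ F) := by
  obtain ⟨q, -, hq⟩ := Finset.mem_biUnion.1 (vars_det_subset _ hp)
  simp only [patternMatrix, Matrix.of_apply] at hq
  split_ifs at hq with h1 h2
  · simp at hq
  · simp at hq
  · rw [vars_def, Multiset.mem_toFinset] at hq
    obtain rfl := Multiset.mem_singleton.1 (Multiset.subset_of_le (degrees_X' _) hq)
    exact ⟨h2, h1⟩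

theorem eval_det_patternMatrix {F : Finset m} {S : Finset (m × m)} {x : m → m → R}
    (hF : ∀ i ∈ F, x i i = 1) (hS : ∀ p ∈ S, x p.1 p.2 = 0) :
    eval (Function.uncurry x) (patternMatrix R F S).det = (Matrix.of x).det := by
  rw [RingHom.map_det]
  congr 1
  ext i j
  simp only [patternMatrix, RingHom.mapMatrix_apply, Matrix.map_apply, Matrix.of_apply]
  split_ifs with h1 h2
  · rw [map_one, h1.1, hF j h1.2]
  · rw [map_zero, hS _ h2]
  · rw [eval_X, Function.uncurry_apply_pair]

theorem uncurry_mem_torusZeroLocus_det_patternMatrix {F : Finset m} {S : Finset (m × m)}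
    {x : m → m → R} (hF : ∀ i ∈ F, x i i = 1) (hS : ∀ p, p ∈ S ↔ x p.1 p.2 = 0)
    (hx : (Matrix.of x).det = 0) :
    Function.uncurry x ∈ torusZeroLocus (patternMatrix R F S).det :=
  ⟨by rw [eval_det_patternMatrix hF fun p hp => (hS p).1 hp, hx],
    fun p hp => (hS p).not.1 (vars_det_patternMatrix hp).1⟩

end PatternMatrix

/-- For a random `n × n` real matrix of type `B_n` — the diagonal entries
`B i i` for `i ≠ 1` are (almost surely) fixed equal to `1`, and the variable entries
(all off-diagonal entries together with `B 1 1`) are independent with laws that are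
atomless off `0` — we have `P(det B = 0) = P(per B̃ = 0)`, where `B̃` is the indicator
matrix of `B`. -/
theorem typeB_prob_det_zero_eq_prob_permanent_indicator_zero
    (n : ℕ) (hn : 1 ≤ n)
    (μ : Fin n → Fin n → Measure ℝ)
    [∀ i j, IsProbabilityMeasure (μ i j)]
    (hfixed : ∀ i : Fin n, i ≠ ⟨0, hn⟩ → μ i i = Measure.dirac 1)
    (hatomless : ∀ i j : Fin n, (i ≠ j ∨ (i = ⟨0, hn⟩ ∧ j = ⟨0, hn⟩)) →
      ∀ x : ℝ, x ≠ 0 → μ i j {x} = 0) :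
    Measure.pi (fun i => Measure.pi (fun j => μ i j))
        {B : Fin n → Fin n → ℝ | (Matrix.of B).det = 0}
      = Measure.pi (fun i => Measure.pi (fun j => μ i j))
        {B : Fin n → Fin n → ℝ | (indicatorMatrix (Matrix.of B)).permanent = 0} := by
  classical
  set F : Finset (Fin n) := {⟨0, hn⟩}ᶜ
  set M := Measure.pi fun i => Measure.pi fun j => μ i j
  have hdiag : ∀ᵐ x ∂M, ∀ i ∈ F, x i i = 1 :=
    (Filter.eventually_all_finset F).2 fun i hi =>
      ae_pi_pi_apply_eq_of_eq_dirac μ (hfixed i (by simpa [F] using hi))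
  have hgeneric (S : Finset (Fin n × Fin n)) : ∀ᵐ x ∂M, (patternMatrix ℝ F S).det ≠ 0 →
      Function.uncurry x ∉ torusZeroLocus (patternMatrix ℝ F S).det :=
    Filter.eventually_imp_distrib_left.2 fun hS => ae_uncurry_notMem_torusZeroLocus μ hS
      fun p hp => hatomless p.1 p.2 (by grind [vars_det_patternMatrix hp, Finset.mem_compl])
  refine le_antisymm (measure_mono_ae ?_) (measure_mono fun x hx => ?_)
  · filter_upwards [hdiag, ae_all_iff.2 hgeneric] with x hx hgen hdet
    by_contra hper
    obtain ⟨σ, hσ⟩ : ∃ σ : Perm (Fin n), ∀ i, x (σ i) i ≠ 0 := by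
      simpa using permanent_indicatorMatrix_eq_zero_iff.not.1 hper
    set S := Finset.univ.filter fun p : Fin n × Fin n => x p.1 p.2 = 0
    exact hgen S (det_patternMatrix_ne_zero (σ := σ) (by simpa [S] using hσ))
      (uncurry_mem_torusZeroLocus_det_patternMatrix hx (by simp [S]) hdet)
  · exact Matrix.det_eq_zero_of_forall_exists_apply_eq_zero_s6
      (permanent_indicatorMatrix_eq_zero_iff.1 hx)
end

section
/- Let n ≥ 1 and 0 < r < 1, and let C̃ be a random n×n matrix whose diagonal entries are all fixed equal to 1 and whose n²−n off-diagonal entries are i.i.d., each equal to 1 with probability r and 0 with probability 1−r. Then P(per C̃ = 1) = ∑_{i=0}^{(n²−n)/2} H_n(i)·r^i·(1−r)^{n²−n−i}, where H_n(i) is the number of acyclic digraphs with vertex set {1,…,n} and exactly i edges. -/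
open MeasureTheory
open scoped ENNReal

/-- An edge set `E` on vertex set `Fin n` contains a directed cycle if there are `j ≥ 2`
distinct vertices `k 0, …, k (j-1)` with all consecutive (cyclic) pairs being edges. -/
def HasDicycle {n : ℕ} (E : Finset (Fin n × Fin n)) : Prop :=
  ∃ j : ℕ, 2 ≤ j ∧ ∃ k : ZMod j → Fin n, Function.Injective k ∧
    ∀ a : ZMod j, (k a, k (a + 1)) ∈ E

/-- An acyclic digraph on `Fin n`: a set of ordered pairs with distinct components
(no loops), containing no directed cycle. -/
def IsAcyclicDigraph {n : ℕ} (E : Finset (Fin n × Fin n)) : Prop :=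
  (∀ e ∈ E, e.1 ≠ e.2) ∧ ¬ HasDicycle E

/-- `H n i`: the number of acyclic digraphs with vertex set `{1, …, n}` and exactly
`i` edges. -/
noncomputable def acyclicDigraphCount (n i : ℕ) : ℕ :=
  Nat.card {E : Finset (Fin n × Fin n) // IsAcyclicDigraph E ∧ E.card = i}

/-- The Bernoulli(r) law on `ℝ`, giving mass `r` to `{1}` and mass `1 - r` to `{0}`. -/
noncomputable def bernoulliReal (r : ℝ) : Measure ℝ :=
  ENNReal.ofReal r • Measure.dirac (1 : ℝ) + ENNReal.ofReal (1 - r) • Measure.dirac (0 : ℝ)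

/-! ### Auxiliary definitions and lemmas -/

/-- The `0/1` matrix attached to an edge set: diagonal entries are `1`, and the
off-diagonal entry in position `(i, j)` is `1` iff `(j, i)` is an edge. -/
def matE (n : ℕ) (E : Finset (Fin n × Fin n)) : Fin n → Fin n → ℝ :=
  fun i j => if i = j then 1 else if (j, i) ∈ E then 1 else 0

lemma matE_entry_nonneg {n : ℕ} (E : Finset (Fin n × Fin n)) (u v : Fin n) :
    0 ≤ matE n E u v := by
  unfold matE; split_ifs <;> norm_num

/-- From a directed cycle we can build a nontrivial permutation moving along the cycle. -/
lemma exists_perm_of_hasDicycle {n : ℕ} {E : Finset (Fin n × Fin n)} (h : HasDicycle E) :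
    ∃ σ : Equiv.Perm (Fin n), σ ≠ 1 ∧ ∀ i, σ i = i ∨ (i, σ i) ∈ E := by
  classical
  obtain ⟨j, hj2, k, hkinj, hkE⟩ := h
  haveI : NeZero j := ⟨by omega⟩
  haveI : Fact (1 < j) := ⟨by omega⟩
  let ι : ZMod j ↪ Fin n := ⟨k, hkinj⟩
  refine ⟨(Equiv.addRight (1 : ZMod j)).viaEmbedding ι, ?_, ?_⟩
  · intro hσ
    have h0 : ((Equiv.addRight (1 : ZMod j)).viaEmbedding ι) (k 0) = k (0 + 1) :=
      (Equiv.addRight (1 : ZMod j)).viaEmbedding_apply ι 0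
    rw [hσ] at h0
    have h0' : (0 : ZMod j) = 0 + 1 := hkinj h0
    rw [zero_add] at h0'
    exact one_ne_zero h0'.symm
  · intro i
    by_cases hi : i ∈ Set.range ι
    · obtain ⟨a, rfl⟩ := hi
      right
      have hv : ((Equiv.addRight (1 : ZMod j)).viaEmbedding ι) (ι a) = ι (a + 1) :=
        (Equiv.addRight (1 : ZMod j)).viaEmbedding_apply ι a
      rw [hv]
      exact hkE a
    · left
      exact (Equiv.addRight (1 : ZMod j)).viaEmbedding_apply_of_notMem ι i hi

/-- Conversely, a nontrivial permutation all of whose moved points go along edges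
yields a directed cycle. -/
lemma hasDicycle_of_perm {n : ℕ} {E : Finset (Fin n × Fin n)} (σ : Equiv.Perm (Fin n))
    (hσ : ∀ i, σ i = i ∨ (i, σ i) ∈ E) (hne : σ ≠ 1) : HasDicycle E := by
  classical
  obtain ⟨x, hx⟩ : ∃ x, σ x ≠ x := by
    by_contra hc
    push_neg at hc
    exact hne (Equiv.ext hc)
  have hper : x ∈ Function.periodicPts ⇑σ := by
    refine ⟨orderOf σ, orderOf_pos σ, ?_⟩
    show (⇑σ)^[orderOf σ] x = x
    rw [Equiv.Perm.iterate_eq_pow, pow_orderOf_eq_one]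
    rfl
  have hj0 : 0 < Function.minimalPeriod ⇑σ x :=
    Function.minimalPeriod_pos_of_mem_periodicPts hper
  have hj1 : Function.minimalPeriod ⇑σ x ≠ 1 := by
    intro h1
    have h2 := Function.iterate_minimalPeriod (f := ⇑σ) (x := x)
    rw [h1] at h2
    simp only [Function.iterate_one] at h2
    exact hx h2
  set j := Function.minimalPeriod ⇑σ x with hj
  have hj2 : 2 ≤ j := by omega
  haveI : NeZero j := ⟨by omega⟩
  haveI : Fact (1 < j) := ⟨by omega⟩
  have key : ∀ m : ℕ, (⇑σ)^[m % j] x = (⇑σ)^[m] x := fun m =>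
    Function.iterate_mod_minimalPeriod_eq
  refine ⟨j, hj2, fun a => (⇑σ)^[a.val] x, ?_, ?_⟩
  · intro a b hab
    have hv := Function.iterate_injOn_Iio_minimalPeriod (f := ⇑σ) (x := x)
      (Set.mem_Iio.2 (ZMod.val_lt a)) (Set.mem_Iio.2 (ZMod.val_lt b)) hab
    exact ZMod.val_injective j hv
  · intro a
    show ((⇑σ)^[a.val] x, (⇑σ)^[(a + 1).val] x) ∈ E
    have hstep : (⇑σ)^[(a + 1).val] x = σ ((⇑σ)^[a.val] x) := by
      rw [ZMod.val_add, ZMod.val_one, key, Function.iterate_succ_apply']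
    have hne' : σ ((⇑σ)^[a.val] x) ≠ (⇑σ)^[a.val] x := by
      intro hfix
      have heq : (⇑σ)^[(a + 1).val] x = (⇑σ)^[a.val] x := by rw [hstep, hfix]
      have hv := Function.iterate_injOn_Iio_minimalPeriod (f := ⇑σ) (x := x)
        (Set.mem_Iio.2 (ZMod.val_lt (a + 1))) (Set.mem_Iio.2 (ZMod.val_lt a)) heq
      have ha1 : a + 1 = a := ZMod.val_injective j hv
      have h10 : (1 : ZMod j) = 0 := by
        calc (1 : ZMod j) = a + 1 - a := by ring
          _ = a - a := by rw [ha1]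
          _ = 0 := by ring
      exact one_ne_zero h10
    rcases hσ ((⇑σ)^[a.val] x) with hfix | hmem
    · exact absurd hfix hne'
    · rw [hstep]
      exact hmem

lemma per_matE_eq_one_iff {n : ℕ} (E : Finset (Fin n × Fin n)) (hE : ∀ e ∈ E, e.1 ≠ e.2) :
    (Matrix.of (matE n E)).permanent = 1 ↔ IsAcyclicDigraph E := by
  classical
  have hterm_nonneg : ∀ σ : Equiv.Perm (Fin n), 0 ≤ ∏ i, matE n E (σ i) i :=
    fun σ => Finset.prod_nonneg fun i _ => matE_entry_nonneg E _ _
  have hterm_one : ∀ σ : Equiv.Perm (Fin n), (∀ i, σ i = i ∨ (i, σ i) ∈ E) →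
      ∏ i, matE n E (σ i) i = 1 := by
    intro σ hσ
    refine Finset.prod_eq_one fun i _ => ?_
    rcases hσ i with h | h
    · simp [matE, h]
    · have hne : σ i ≠ i := Ne.symm (hE _ h)
      simp [matE, hne, h]
  have hterm_cond : ∀ σ : Equiv.Perm (Fin n), (∏ i, matE n E (σ i) i) ≠ 0 →
      ∀ i, σ i = i ∨ (i, σ i) ∈ E := by
    intro σ hσ i
    have hfac : matE n E (σ i) i ≠ 0 := by
      intro h0
      exact hσ (Finset.prod_eq_zero (Finset.mem_univ i) h0)
    by_cases hii : σ i = i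
    · exact Or.inl hii
    · right
      by_contra hmem
      apply hfac
      simp [matE, hii, hmem]
  rw [Matrix.permanent]
  simp only [Matrix.of_apply]
  constructor
  · intro hper
    refine ⟨hE, fun hcyc => ?_⟩
    obtain ⟨σ, hσne, hσ⟩ := exists_perm_of_hasDicycle hcyc
    have h2 : (2 : ℝ) ≤ ∑ τ : Equiv.Perm (Fin n), ∏ i, matE n E (τ i) i := by
      have hpair : ∑ τ ∈ ({1, σ} : Finset (Equiv.Perm (Fin n))), ∏ i, matE n E (τ i) i
          = 2 := by
        rw [Finset.sum_pair (Ne.symm hσne),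
          hterm_one 1 (fun i => Or.inl (Equiv.Perm.one_apply i)), hterm_one σ hσ]
        norm_num
      calc (2 : ℝ) = _ := hpair.symm
        _ ≤ _ := Finset.sum_le_sum_of_subset_of_nonneg (Finset.subset_univ _)
            fun τ _ _ => hterm_nonneg τ
    rw [hper] at h2
    linarith
  · intro hacyc
    rw [Finset.sum_eq_single 1]
    · exact hterm_one 1 fun i => Or.inl (Equiv.Perm.one_apply i)
    · intro τ _ hτ
      by_contra h0
      exact hacyc.2 (hasDicycle_of_perm τ (hterm_cond τ h0) hτ)
    · intro h
      exact absurd (Finset.mem_univ 1) h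

lemma card_le_of_isAcyclicDigraph {n : ℕ} {E : Finset (Fin n × Fin n)}
    (h : IsAcyclicDigraph E) : E.card ≤ (n ^ 2 - n) / 2 := by
  classical
  have h10 : (1 : ZMod 2) ≠ 0 := by decide
  have hcases : ∀ c : ZMod 2, c = 0 ∨ c = 1 := by decide
  have hno2 : ∀ p ∈ E, p.swap ∉ E := by
    rintro ⟨u, v⟩ hp hq
    have hne : u ≠ v := h.1 _ hp
    apply h.2
    refine ⟨2, le_refl 2, fun a => if a = 0 then u else v, ?_, ?_⟩
    · intro a b hab
      rcases hcases a with ha | ha <;> rcases hcases b with hb | hb <;> subst ha <;> subst hb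
      · rfl
      · simp only [h10] at hab
        simp at hab
        exact absurd hab hne
      · simp only [h10] at hab
        simp at hab
        exact absurd hab.symm hne
      · rfl
    · intro a
      have h01 : (0 + 1 : ZMod 2) = 1 := by decide
      have h11 : (1 + 1 : ZMod 2) = 0 := by decide
      rcases hcases a with ha | ha <;> subst ha
      · show ((if (0 : ZMod 2) = 0 then u else v), (if (0 + 1 : ZMod 2) = 0 then u else v)) ∈ E
        rw [h01]
        simpa [h10] using hp
      · show ((if (1 : ZMod 2) = 0 then u else v), (if (1 + 1 : ZMod 2) = 0 then u else v)) ∈ E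
        rw [h11]
        simpa [h10] using hq
  have hdisj : Disjoint E (E.image Prod.swap) := by
    rw [Finset.disjoint_left]
    intro p hp hp'
    obtain ⟨q, hq, hqe⟩ := Finset.mem_image.1 hp'
    have hq' : q = p.swap := by rw [← hqe]; simp
    rw [hq'] at hq
    exact hno2 p.swap hq (by simpa using hp)
  have hsub : E ∪ E.image Prod.swap ⊆ Finset.univ.offDiag := by
    intro p hp
    rcases Finset.mem_union.1 hp with hp | hp
    · exact Finset.mem_offDiag.2 ⟨Finset.mem_univ _, Finset.mem_univ _, h.1 _ hp⟩
    · obtain ⟨q, hq, hqe⟩ := Finset.mem_image.1 hp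
      subst hqe
      refine Finset.mem_offDiag.2 ⟨Finset.mem_univ _, Finset.mem_univ _, ?_⟩
      simpa using Ne.symm (h.1 _ hq)
  have hcard : 2 * E.card ≤ n * n - n := by
    have h1 : (E ∪ E.image Prod.swap).card = E.card + (E.image Prod.swap).card :=
      Finset.card_union_of_disjoint hdisj
    have h2 : (E.image Prod.swap).card = E.card :=
      Finset.card_image_of_injective _ Prod.swap_injective
    have h3 := Finset.card_le_card hsub
    have h4 : (Finset.univ.offDiag : Finset (Fin n × Fin n)).card = n * n - n := by
      rw [Finset.offDiag_card, Finset.card_univ, Fintype.card_fin]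
    rw [h1, h2, h4] at h3
    omega
  have hnn : n ^ 2 = n * n := pow_two n
  rw [Nat.le_div_iff_mul_le (by norm_num : 0 < 2)]
  omega

lemma bernoulliReal_apply_one (r : ℝ) : bernoulliReal r {(1 : ℝ)} = ENNReal.ofReal r := by
  rw [bernoulliReal, Measure.add_apply, Measure.smul_apply, Measure.smul_apply,
    smul_eq_mul, smul_eq_mul, Measure.dirac_apply_of_mem (Set.mem_singleton _),
    Measure.dirac_apply' _ (measurableSet_singleton _),
    Set.indicator_of_notMem (by norm_num : (0 : ℝ) ∉ ({1} : Set ℝ))]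
  simp

lemma bernoulliReal_apply_zero (r : ℝ) : bernoulliReal r {(0 : ℝ)} = ENNReal.ofReal (1 - r) := by
  rw [bernoulliReal, Measure.add_apply, Measure.smul_apply, Measure.smul_apply,
    smul_eq_mul, smul_eq_mul, Measure.dirac_apply_of_mem (Set.mem_singleton _),
    Measure.dirac_apply' _ (measurableSet_singleton _),
    Set.indicator_of_notMem (by norm_num : (1 : ℝ) ∉ ({0} : Set ℝ))]
  simp

lemma bernoulliReal_prob {r : ℝ} (h0 : 0 ≤ r) (h1 : r ≤ 1) :
    IsProbabilityMeasure (bernoulliReal r) := by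
  constructor
  rw [bernoulliReal, Measure.add_apply, Measure.smul_apply, Measure.smul_apply,
    smul_eq_mul, smul_eq_mul, measure_univ, measure_univ, mul_one, mul_one,
    ← ENNReal.ofReal_add h0 (by linarith)]
  norm_num

/-- For a random `n × n` matrix `C̃` with all diagonal entries fixed equal
to `1` and i.i.d. Bernoulli(r) off-diagonal entries,
`P(per C̃ = 1) = ∑_{i=0}^{(n²-n)/2} H_n(i) rⁱ (1-r)^{n²-n-i}`, where `H_n(i)` is the number
of acyclic digraphs with vertex set `{1, …, n}` and exactly `i` edges. -/
theorem prob_permanent_one_eq_sum_acyclic_digraph_counts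
    (n : ℕ) (hn : 1 ≤ n) (r : ℝ) (hr0 : 0 < r) (hr1 : r < 1) :
    Measure.pi (fun i : Fin n => Measure.pi (fun j : Fin n =>
        if i = j then Measure.dirac (1 : ℝ) else bernoulliReal r))
        {C : Fin n → Fin n → ℝ | (Matrix.of C).permanent = 1}
      = ∑ i ∈ Finset.range ((n ^ 2 - n) / 2 + 1),
          (acyclicDigraphCount n i : ℝ≥0∞) * ENNReal.ofReal r ^ i *
            ENNReal.ofReal (1 - r) ^ (n ^ 2 - n - i) := by
  classical
  have hr0' : (0 : ℝ) ≤ r := hr0.le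
  have hr1' : (0 : ℝ) ≤ 1 - r := by linarith
  haveI hber_prob : IsProbabilityMeasure (bernoulliReal r) :=
    bernoulliReal_prob hr0' hr1.le
  haveI hprob : ∀ i j : Fin n,
      IsProbabilityMeasure (if i = j then Measure.dirac (1 : ℝ) else bernoulliReal r) := by
    intro i j
    split_ifs
    · infer_instance
    · exact hber_prob
  haveI hprob2 : ∀ i : Fin n, IsProbabilityMeasure
      (Measure.pi (fun j : Fin n => if i = j then Measure.dirac (1 : ℝ) else bernoulliReal r)) :=
    fun i => inferInstance
  set μ := Measure.pi (fun i : Fin n => Measure.pi (fun j : Fin n =>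
      if i = j then Measure.dirac (1 : ℝ) else bernoulliReal r)) with hμ
  haveI hμprob : IsProbabilityMeasure μ := by rw [hμ]; infer_instance
  set N := n ^ 2 - n with hN
  set Ω : Finset (Fin n × Fin n) := Finset.univ.offDiag with hΩ
  have hΩcard : Ω.card = N := by
    rw [hΩ, hN, Finset.offDiag_card, Finset.card_univ, Fintype.card_fin, pow_two]
  have hab : ENNReal.ofReal r + ENNReal.ofReal (1 - r) = 1 := by
    rw [← ENNReal.ofReal_add hr0' hr1']
    norm_num
  -- measure of singletons
  have hsingle : ∀ f : Fin n → Fin n → ℝ,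
      μ {f} = ∏ i, ∏ j,
        (if i = j then Measure.dirac (1 : ℝ) else bernoulliReal r) {f i j} := by
    intro f
    rw [hμ, ← Set.univ_pi_singleton f, Measure.pi_pi]
    refine Finset.prod_congr rfl fun i _ => ?_
    rw [← Set.univ_pi_singleton (f i), Measure.pi_pi]
  -- measure of the singleton of a matrix coming from an edge set
  have hmuE : ∀ E ∈ Ω.powerset,
      μ {matE n E} = ENNReal.ofReal r ^ E.card * ENNReal.ofReal (1 - r) ^ (N - E.card) := by
    intro E hEp
    rw [Finset.mem_powerset] at hEp
    rw [hsingle]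
    have hstep1 : ∀ i j : Fin n,
        (if i = j then Measure.dirac (1 : ℝ) else bernoulliReal r) {matE n E i j}
          = if i = j then 1 else
              (if (j, i) ∈ E then ENNReal.ofReal r else ENNReal.ofReal (1 - r)) := by
      intro i j
      by_cases hij : i = j
      · subst hij
        rw [if_pos rfl, if_pos rfl]
        have hm : matE n E i i = 1 := if_pos rfl
        rw [hm]
        exact Measure.dirac_apply_of_mem rfl
      · rw [if_neg hij, if_neg hij]
        have hm : matE n E i j = if (j, i) ∈ E then 1 else 0 := if_neg hij
        rw [hm]
        by_cases hmem : (j, i) ∈ E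
        · rw [if_pos hmem, if_pos hmem]
          exact bernoulliReal_apply_one r
        · rw [if_neg hmem, if_neg hmem]
          exact bernoulliReal_apply_zero r
    calc (∏ i, ∏ j, (if i = j then Measure.dirac (1 : ℝ) else bernoulliReal r) {matE n E i j})
        = ∏ i, ∏ j, (if i = j then (1 : ℝ≥0∞) else
            (if (j, i) ∈ E then ENNReal.ofReal r else ENNReal.ofReal (1 - r))) :=
          Finset.prod_congr rfl fun i _ => Finset.prod_congr rfl fun j _ => hstep1 i j
      _ = ∏ p ∈ Finset.univ ×ˢ Finset.univ, (if p.1 = p.2 then (1 : ℝ≥0∞) else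
            (if (p.2, p.1) ∈ E then ENNReal.ofReal r else ENNReal.ofReal (1 - r))) :=
          (Finset.prod_product' _ _ _).symm
      _ = ∏ p : Fin n × Fin n, (if p.1 = p.2 then (1 : ℝ≥0∞) else
            (if (p.2, p.1) ∈ E then ENNReal.ofReal r else ENNReal.ofReal (1 - r))) := by
          rw [Finset.univ_product_univ]
      _ = ∏ p ∈ Ω, (if p.1 = p.2 then (1 : ℝ≥0∞) else
            (if (p.2, p.1) ∈ E then ENNReal.ofReal r else ENNReal.ofReal (1 - r))) := by
          refine (Finset.prod_subset (Finset.subset_univ Ω) fun p _ hp => ?_).symm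
          have hpd : p.1 = p.2 := by
            by_contra hc
            exact hp (Finset.mem_offDiag.2 ⟨Finset.mem_univ _, Finset.mem_univ _, hc⟩)
          rw [if_pos hpd]
      _ = ∏ p ∈ Ω, (if p ∈ E then ENNReal.ofReal r else ENNReal.ofReal (1 - r)) := by
          refine Finset.prod_nbij' Prod.swap Prod.swap ?_ ?_ ?_ ?_ ?_
          · intro p hp
            obtain ⟨-, -, hne⟩ := Finset.mem_offDiag.1 hp
            exact Finset.mem_offDiag.2 ⟨Finset.mem_univ _, Finset.mem_univ _, Ne.symm hne⟩
          · intro p hp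
            obtain ⟨-, -, hne⟩ := Finset.mem_offDiag.1 hp
            exact Finset.mem_offDiag.2 ⟨Finset.mem_univ _, Finset.mem_univ _, Ne.symm hne⟩
          · intro p _; exact Prod.swap_swap p
          · intro p _; exact Prod.swap_swap p
          · intro p hp
            obtain ⟨-, -, hne⟩ := Finset.mem_offDiag.1 hp
            rw [if_neg hne]
            rfl
      _ = ENNReal.ofReal r ^ E.card * ENNReal.ofReal (1 - r) ^ (N - E.card) := by
          rw [Finset.prod_ite, Finset.filter_mem_eq_inter, Finset.inter_eq_right.2 hEp,
            ← Finset.sdiff_eq_filter, Finset.prod_const, Finset.prod_const,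
            Finset.card_sdiff_of_subset hEp, hΩcard]
  -- injectivity of `matE` on subsets of `Ω`
  have hmatE_inj : ∀ E₁ ∈ Ω.powerset, ∀ E₂ ∈ Ω.powerset, matE n E₁ = matE n E₂ → E₁ = E₂ := by
    intro E₁ h₁ E₂ h₂ h
    rw [Finset.mem_powerset] at h₁ h₂
    ext p
    obtain ⟨u, v⟩ := p
    by_cases huv : u = v
    · subst huv
      constructor <;> intro hmem
      · exact absurd (Finset.mem_offDiag.1 (h₁ hmem)).2.2 (by simp)
      · exact absurd (Finset.mem_offDiag.1 (h₂ hmem)).2.2 (by simp)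
    · have hvu : v ≠ u := Ne.symm huv
      have hcong := congrFun (congrFun h v) u
      simp only [matE] at hcong
      rw [if_neg hvu, if_neg hvu] at hcong
      constructor <;> intro hmem
      · by_contra h2
        rw [if_pos hmem, if_neg h2] at hcong
        norm_num at hcong
      · by_contra h2
        rw [if_neg h2, if_pos hmem] at hcong
        norm_num at hcong
  -- measure of a finite union of matrix singletons
  have hmuUnion : ∀ s : Finset (Finset (Fin n × Fin n)), s ⊆ Ω.powerset →
      μ (⋃ E ∈ s, ({matE n E} : Set (Fin n → Fin n → ℝ))) = ∑ E ∈ s, μ {matE n E} := by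
    intro s hs
    refine measure_biUnion_finset ?_ fun E _ => measurableSet_singleton _
    intro E₁ h₁ E₂ h₂ hne
    refine Set.disjoint_singleton.2 fun hc => hne ?_
    exact hmatE_inj E₁ (hs h₁) E₂ (hs h₂) hc
  -- the full-measure set of 0/1 matrices with unit diagonal
  set T : Set (Fin n → Fin n → ℝ) := ⋃ E ∈ Ω.powerset, ({matE n E} : Set _) with hT
  have hTmeas : MeasurableSet T :=
    Finset.measurableSet_biUnion _ fun E _ => measurableSet_singleton _
  have hmuT : μ T = 1 := by
    rw [hT, hmuUnion _ (le_refl _)]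
    calc ∑ E ∈ Ω.powerset, μ {matE n E}
        = ∑ E ∈ Ω.powerset,
            ENNReal.ofReal r ^ E.card * ENNReal.ofReal (1 - r) ^ (N - E.card) :=
          Finset.sum_congr rfl fun E hE => hmuE E hE
      _ = ∑ E ∈ Ω.powerset,
            (∏ _p ∈ E, ENNReal.ofReal r) * ∏ _p ∈ Ω \ E, ENNReal.ofReal (1 - r) := by
          refine Finset.sum_congr rfl fun E hE => ?_
          rw [Finset.mem_powerset] at hE
          rw [Finset.prod_const, Finset.prod_const, Finset.card_sdiff_of_subset hE, hΩcard]
      _ = ∏ _p ∈ Ω, (ENNReal.ofReal r + ENNReal.ofReal (1 - r)) :=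
          (Finset.prod_add _ _ _).symm
      _ = 1 := by rw [Finset.prod_const, hab, one_pow]
  have hTc : μ Tᶜ = 0 := by
    rw [measure_compl hTmeas (measure_ne_top μ T), hmuT, measure_univ, tsub_self]
  -- the event
  set A : Set (Fin n → Fin n → ℝ) := {C | (Matrix.of C).permanent = 1} with hA
  have hAeq : μ A = μ (A ∩ T) := by
    refine le_antisymm ?_ (measure_mono Set.inter_subset_left)
    calc μ A = μ ((A ∩ T) ∪ (A ∩ Tᶜ)) := by rw [Set.inter_union_compl]
      _ ≤ μ (A ∩ T) + μ (A ∩ Tᶜ) := measure_union_le _ _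
      _ ≤ μ (A ∩ T) + 0 :=
          add_le_add le_rfl ((measure_mono Set.inter_subset_right).trans hTc.le)
      _ = μ (A ∩ T) := add_zero _
  set 𝒜 : Finset (Finset (Fin n × Fin n)) :=
    Ω.powerset.filter (fun E => IsAcyclicDigraph E) with h𝒜
  have hloops : ∀ E : Finset (Fin n × Fin n), E ⊆ Ω → ∀ e ∈ E, e.1 ≠ e.2 :=
    fun E hEp e he => (Finset.mem_offDiag.1 (hEp he)).2.2
  have hAT : A ∩ T = ⋃ E ∈ 𝒜, ({matE n E} : Set (Fin n → Fin n → ℝ)) := by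
    ext m
    simp only [hA, hT, h𝒜, Set.mem_inter_iff, Set.mem_setOf_eq, Set.mem_iUnion,
      Set.mem_singleton_iff, Finset.mem_filter, Finset.mem_powerset, exists_prop]
    constructor
    · rintro ⟨hper, E, hEp, rfl⟩
      exact ⟨E, ⟨hEp, (per_matE_eq_one_iff E (hloops E hEp)).1 hper⟩, rfl⟩
    · rintro ⟨E, ⟨hEp, hacyc⟩, rfl⟩
      exact ⟨(per_matE_eq_one_iff E (hloops E hEp)).2 hacyc, E, hEp, rfl⟩
  -- counting
  have hHcount : ∀ i : ℕ,
      ((𝒜.filter (fun E => E.card = i)).card : ℝ≥0∞) = (acyclicDigraphCount n i : ℝ≥0∞) := by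
    intro i
    congr 1
    rw [acyclicDigraphCount, Nat.card_eq_fintype_card, Fintype.card_subtype]
    congr 1
    ext E
    simp only [h𝒜, Finset.mem_filter, Finset.mem_powerset, Finset.mem_univ, true_and]
    constructor
    · rintro ⟨⟨-, hac⟩, hcard⟩
      exact ⟨hac, hcard⟩
    · rintro ⟨hac, hcard⟩
      refine ⟨⟨fun p hp => ?_, hac⟩, hcard⟩
      exact Finset.mem_offDiag.2 ⟨Finset.mem_univ _, Finset.mem_univ _, hac.1 p hp⟩
  have hmaps : ∀ E ∈ 𝒜, E.card ∈ Finset.range (N / 2 + 1) := by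
    intro E hE
    rw [h𝒜, Finset.mem_filter] at hE
    exact Finset.mem_range.2 (Nat.lt_succ_of_le (card_le_of_isAcyclicDigraph hE.2))
  -- putting it together
  show μ A = _
  rw [hAeq, hAT, hmuUnion 𝒜 (Finset.filter_subset _ _)]
  calc ∑ E ∈ 𝒜, μ {matE n E}
      = ∑ E ∈ 𝒜, ENNReal.ofReal r ^ E.card * ENNReal.ofReal (1 - r) ^ (N - E.card) :=
        Finset.sum_congr rfl fun E hE => hmuE E (Finset.mem_of_mem_filter E hE)
    _ = ∑ i ∈ Finset.range (N / 2 + 1), ∑ E ∈ 𝒜.filter (fun E => E.card = i),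
          ENNReal.ofReal r ^ E.card * ENNReal.ofReal (1 - r) ^ (N - E.card) :=
        (Finset.sum_fiberwise_of_maps_to hmaps _).symm
    _ = ∑ i ∈ Finset.range (N / 2 + 1),
          (acyclicDigraphCount n i : ℝ≥0∞) * ENNReal.ofReal r ^ i *
            ENNReal.ofReal (1 - r) ^ (N - i) := by
        refine Finset.sum_congr rfl fun i _ => ?_
        rw [Finset.sum_congr rfl (fun E hE => ?_), Finset.sum_const, nsmul_eq_mul,
          hHcount i, mul_assoc]
        rw [(Finset.mem_filter.1 hE).2]
end

section
/- Every n×n matrix with entries in {0,1} whose permanent equals 0 has at least n entries equal to 0 (equivalently, at most n²−n entries equal to 1). -/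
/-- Every `n × n` matrix with entries in `{0,1}` whose permanent equals
`0` has at least `n` entries equal to `0`. -/
theorem binary_permanent_zero_many_zero_entries
    (n : ℕ) (M : Matrix (Fin n) (Fin n) ℝ)
    (hbin : ∀ i j, M i j = 0 ∨ M i j = 1)
    (hper : M.permanent = 0) :
    n ≤ (Finset.univ.filter fun p : Fin n × Fin n => M p.1 p.2 = 0).card := by
  by_contra h
  push_neg at h
  set Z := Finset.univ.filter fun p : Fin n × Fin n => M p.1 p.2 = 0 with hZ
  set t : Fin n → Finset (Fin n) := fun i => Finset.univ.filter fun j => M j i = 1 with ht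
  have hall : ∀ s : Finset (Fin n), s.card ≤ (s.biUnion t).card := by
    intro s
    by_contra hs
    push_neg at hs
    set N := s.biUnion t with hN
    have hsub : (Finset.univ \ N) ×ˢ s ⊆ Z := by
      intro p hp
      simp only [Finset.mem_product, Finset.mem_sdiff, Finset.mem_univ, true_and] at hp
      simp only [hZ, Finset.mem_filter, Finset.mem_univ, true_and]
      rcases hbin p.1 p.2 with h0 | h1
      · exact h0
      · exact absurd (Finset.mem_biUnion.mpr ⟨p.2, hp.2, by
          simp only [ht, Finset.mem_filter, Finset.mem_univ, true_and]; exact h1⟩) hp.1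
    have hcard : (n - N.card) * s.card ≤ Z.card := by
      have := Finset.card_le_card hsub
      rwa [Finset.card_product, Finset.card_sdiff_of_subset (Finset.subset_univ N),
        Finset.card_univ, Fintype.card_fin] at this
    have hsn : s.card ≤ n := by
      simpa using Finset.card_le_card (Finset.subset_univ s)
    obtain ⟨a, ha⟩ : ∃ a, n = a + s.card := ⟨n - s.card, by omega⟩
    have h1 : a + 1 ≤ n - N.card := by omega
    have h2 : 1 ≤ s.card := by omega
    have : n ≤ (n - N.card) * s.card := by
      calc n = a + s.card := ha
        _ ≤ (a + 1) * s.card := by nlinarith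
        _ ≤ (n - N.card) * s.card := Nat.mul_le_mul_right _ h1
    omega
  obtain ⟨f, hinj, hf⟩ := (Finset.all_card_le_biUnion_card_iff_exists_injective t).mp hall
  have hbij : Function.Bijective f := (Finite.injective_iff_bijective).mp hinj
  set σ : Equiv.Perm (Fin n) := Equiv.ofBijective f hbij with hσ
  have hterm : ∏ i, M (σ i) i = 1 := by
    apply Finset.prod_eq_one
    intro i _
    have := hf i
    simp only [ht, Finset.mem_filter, Finset.mem_univ, true_and] at this
    simpa [hσ, Equiv.ofBijective] using this
  have hpos : 0 < M.permanent := by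
    rw [Matrix.permanent]
    apply Finset.sum_pos'
    · intro τ _
      apply Finset.prod_nonneg
      intro i _
      rcases hbin (τ i) i with h0 | h0 <;> rw [h0] <;> norm_num
    · exact ⟨σ, Finset.mem_univ σ, by rw [hterm]; norm_num⟩
  linarith
end

section
/- For every n ≥ 2, the number of n×n matrices with entries in {0,1} that have permanent 0 and exactly n entries equal to 0 is exactly 2n; such a matrix must have all its n zero entries filling a single row or a single column (with all other entries equal to 1). -/
/-- The real `{0,1}`-matrix associated with a Boolean matrix. -/
noncomputable def boolToMatrix {n : ℕ} (b : Fin n → Fin n → Bool) :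
    Matrix (Fin n) (Fin n) ℝ :=
  Matrix.of fun i j => if b i j then 1 else 0

/-- The number of entries equal to `0` of a Boolean `n × n` matrix. -/
def zerosCount {n : ℕ} (b : Fin n → Fin n → Bool) : ℕ :=
  (Finset.univ.filter fun p : Fin n × Fin n => b p.1 p.2 = false).card

lemma perm_zero_iff {n : ℕ} (b : Fin n → Fin n → Bool) :
    (boolToMatrix b).permanent = 0 ↔ ∀ σ : Equiv.Perm (Fin n), ∃ i, b (σ i) i = false := by
  unfold Matrix.permanent boolToMatrix
  rw [Finset.sum_eq_zero_iff_of_nonneg]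
  · constructor
    · intro h σ
      have := h σ (Finset.mem_univ σ)
      rw [Finset.prod_eq_zero_iff] at this
      obtain ⟨i, _, hi⟩ := this
      refine ⟨i, ?_⟩
      by_contra hb
      simp only [Bool.not_eq_false] at hb
      simp [hb] at hi
    · intro h σ _
      obtain ⟨i, hi⟩ := h σ
      exact Finset.prod_eq_zero (Finset.mem_univ i) (by simp [hi])
  · intro σ _
    exact Finset.prod_nonneg fun i _ => by simp only [Matrix.of_apply]; split <;> norm_num

lemma arith_lemma (n m s : ℕ) (hms : m < s) (hsn : s ≤ n)
    (h : (n - m) * s ≤ n) : (m = 0 ∧ s = 1) ∨ (m = n - 1 ∧ s = n) := by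
  have h1 : n - s + 1 ≤ n - m := by omega
  have h2 : (n - s + 1) * s ≤ n := le_trans (Nat.mul_le_mul_right s h1) h
  have h4 : n - s ≤ (n - s) * s := Nat.le_mul_of_pos_right _ (by omega)
  have h5 : (n - s + 1) * s = (n - s) * s + s := by ring
  have h6 : (n - s) * s = n - s := by omega
  have h7 : n - s = 0 ∨ s = 1 := by
    rcases Nat.eq_zero_or_pos (n - s) with h | h
    · exact Or.inl h
    · right
      by_contra hs1
      have : 2 ≤ s := by omega
      have := Nat.mul_le_mul_left (n - s) this
      omega
  -- m = s - 1
  have h8 : (n - m) * s ≤ (n - s + 1) * s := by omega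
  have h9 : n - m ≤ n - s + 1 := Nat.le_of_mul_le_mul_right h8 (by omega)
  have hm : m = s - 1 := by omega
  omega

lemma structure_lemma {n : ℕ} (hn : 2 ≤ n) (b : Fin n → Fin n → Bool)
    (hp : (boolToMatrix b).permanent = 0) (hz : zerosCount b = n) :
    (∃ i₀ : Fin n, (∀ j, b i₀ j = false) ∧ ∀ i j, i ≠ i₀ → b i j = true) ∨
    (∃ j₀ : Fin n, (∀ i, b i j₀ = false) ∧ ∀ i j, j ≠ j₀ → b i j = true) := by
  classical
  set t : Fin n → Finset (Fin n) := fun j => Finset.univ.filter (fun i => b i j = true) with ht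
  have hnoinj : ¬ ∃ f : Fin n → Fin n, Function.Injective f ∧ ∀ j, f j ∈ t j := by
    rintro ⟨f, hf, hft⟩
    have hbij : Function.Bijective f := (Fintype.bijective_iff_injective_and_card f).mpr ⟨hf, rfl⟩
    obtain ⟨i, hi⟩ := (perm_zero_iff b).mp hp (Equiv.ofBijective f hbij)
    have h2 := hft i
    simp only [ht, Finset.mem_filter, Finset.mem_univ, true_and] at h2
    rw [show (Equiv.ofBijective f hbij) i = f i from rfl, h2] at hi
    simp at hi
  rw [← Finset.all_card_le_biUnion_card_iff_exists_injective t] at hnoinj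
  push_neg at hnoinj
  obtain ⟨S, hS⟩ := hnoinj
  set N := S.biUnion t with hN
  set Z := Finset.univ.filter (fun p : Fin n × Fin n => b p.1 p.2 = false) with hZ
  have hZcard : Z.card = n := hz
  set B := (Finset.univ \ N) ×ˢ S with hB
  have hBZ : B ⊆ Z := by
    intro p hp'
    simp only [hB, Finset.mem_product, Finset.mem_sdiff, Finset.mem_univ, true_and] at hp'
    simp only [hZ, Finset.mem_filter, Finset.mem_univ, true_and]
    by_contra hbp
    simp only [Bool.not_eq_false] at hbp
    exact hp'.1 (Finset.mem_biUnion.mpr ⟨p.2, hp'.2, by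
      simp [ht, hbp]⟩)
  have hBcard : B.card = (n - N.card) * S.card := by
    simp [hB, Finset.card_sdiff_of_subset (Finset.subset_univ N)]
  have hle : (n - N.card) * S.card ≤ n := by
    have h' := Finset.card_le_card hBZ
    rwa [hBcard, hZcard] at h'
  have hsn : S.card ≤ n := le_trans (Finset.card_le_univ S) (by simp)
  have hZB : Z = B := by
    refine (Finset.eq_of_subset_of_card_le hBZ ?_).symm
    rw [hZcard, hBcard]
    rcases arith_lemma n N.card S.card hS hsn hle with ⟨hm, hs⟩ | ⟨hm, hs⟩
    · rw [hm, hs]; omega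
    · rw [hm, hs]
      have h1 : n - (n - 1) = 1 := by omega
      rw [h1, one_mul]
  have hmemZ : ∀ i j : Fin n, b i j = false ↔ (i ∉ N ∧ j ∈ S) := by
    intro i j
    constructor
    · intro h
      have : (i, j) ∈ B := by
        rw [← hZB]; simp [hZ, h]
      simpa [hB, Finset.mem_product, Finset.mem_sdiff] using this
    · intro ⟨h1, h2⟩
      have : (i, j) ∈ Z := hBZ (by simp [hB, Finset.mem_product, Finset.mem_sdiff, h1, h2])
      simpa [hZ] using this
  rcases arith_lemma n N.card S.card hS hsn hle with ⟨hm, hs⟩ | ⟨hm, hs⟩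
  · -- column case: S = {j₀}, N = ∅
    right
    obtain ⟨j₀, hj₀⟩ := Finset.card_eq_one.mp hs
    have hNe : N = ∅ := Finset.card_eq_zero.mp hm
    refine ⟨j₀, fun i => ?_, fun i j hj => ?_⟩
    · exact (hmemZ i j₀).mpr ⟨by simp [hNe], by simp [hj₀]⟩
    · by_contra h
      simp only [Bool.not_eq_true] at h
      have := ((hmemZ i j).mp h).2
      rw [hj₀] at this
      exact hj (Finset.mem_singleton.mp this)
  · -- row case: S = univ, univ \ N = {i₀}
    left
    have hSuniv : S = Finset.univ := Finset.eq_univ_of_card S (by simp [hs])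
    have hcard1 : (Finset.univ \ N).card = 1 := by
      rw [Finset.card_sdiff_of_subset (Finset.subset_univ N)]
      simp [hm]; omega
    obtain ⟨i₀, hi₀⟩ := Finset.card_eq_one.mp hcard1
    have hNmem : ∀ i : Fin n, i ∉ N ↔ i = i₀ := by
      intro i
      rw [← Finset.mem_singleton, ← hi₀]
      simp
    refine ⟨i₀, fun j => ?_, fun i j hi => ?_⟩
    · exact (hmemZ i₀ j).mpr ⟨(hNmem i₀).mpr rfl, by simp [hSuniv]⟩
    · by_contra h
      simp only [Bool.not_eq_true] at h
      exact hi ((hNmem i).mp ((hmemZ i j).mp h).1)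

lemma rowMat_mem {n : ℕ} (i₀ : Fin n) :
    (boolToMatrix (fun i _ : Fin n => decide (i ≠ i₀))).permanent = 0 ∧
    zerosCount (fun i _ : Fin n => decide (i ≠ i₀)) = n := by
  constructor
  · rw [perm_zero_iff]
    intro σ
    exact ⟨σ.symm i₀, by simp⟩
  · unfold zerosCount
    have h : (Finset.univ.filter fun p : Fin n × Fin n => decide (p.1 ≠ i₀) = false)
        = {i₀} ×ˢ Finset.univ := by
      ext p
      simp only [Finset.mem_filter, Finset.mem_univ, true_and, decide_eq_false_iff_not,
        not_not, Finset.mem_product, Finset.mem_singleton, and_true]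
    rw [h, Finset.card_product]
    simp

lemma colMat_mem {n : ℕ} (j₀ : Fin n) :
    (boolToMatrix (fun _ j : Fin n => decide (j ≠ j₀))).permanent = 0 ∧
    zerosCount (fun _ j : Fin n => decide (j ≠ j₀)) = n := by
  constructor
  · rw [perm_zero_iff]
    intro σ
    exact ⟨j₀, by simp⟩
  · unfold zerosCount
    have h : (Finset.univ.filter fun p : Fin n × Fin n => decide (p.2 ≠ j₀) = false)
        = Finset.univ ×ˢ {j₀} := by
      ext p
      simp only [Finset.mem_filter, Finset.mem_univ, true_and, decide_eq_false_iff_not,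
        not_not, Finset.mem_product, Finset.mem_singleton, true_and]
    rw [h, Finset.card_product]
    simp

/-- For `n ≥ 2`, there are exactly `2n` binary `n × n` matrices with
permanent `0` and exactly `n` zero entries; moreover, any such matrix has its `n` zero
entries filling a single row or a single column, with all other entries equal to `1`. -/
theorem binary_permanent_zero_exactly_n_zeros
    (n : ℕ) (hn : 2 ≤ n) :
    (Finset.univ.filter fun b : Fin n → Fin n → Bool =>
        (boolToMatrix b).permanent = 0 ∧ zerosCount b = n).card = 2 * n
    ∧ ∀ b : Fin n → Fin n → Bool, (boolToMatrix b).permanent = 0 → zerosCount b = n →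
        ((∃ i₀ : Fin n, (∀ j, b i₀ j = false) ∧ ∀ i j, i ≠ i₀ → b i j = true) ∨
         (∃ j₀ : Fin n, (∀ i, b i j₀ = false) ∧ ∀ i j, j ≠ j₀ → b i j = true)) := by
  classical
  have hnt : Nontrivial (Fin n) := by
    have : 2 ≤ Fintype.card (Fin n) := by simpa using hn
    exact Fintype.one_lt_card_iff_nontrivial.mp this
  refine ⟨?_, fun b hp hz => structure_lemma hn b hp hz⟩
  have hset : (Finset.univ.filter fun b : Fin n → Fin n → Bool =>
        (boolToMatrix b).permanent = 0 ∧ zerosCount b = n)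
      = (Finset.univ.image fun i₀ : Fin n => fun i _ : Fin n => decide (i ≠ i₀))
        ∪ (Finset.univ.image fun j₀ : Fin n => fun _ j : Fin n => decide (j ≠ j₀)) := by
    ext b
    simp only [Finset.mem_filter, Finset.mem_univ, true_and, Finset.mem_union, Finset.mem_image]
    constructor
    · rintro ⟨hp, hz⟩
      rcases structure_lemma hn b hp hz with ⟨i₀, h1, h2⟩ | ⟨j₀, h1, h2⟩
      · left
        refine ⟨i₀, ?_⟩
        symm
        funext i j
        by_cases h : i = i₀
        · subst h; simp [h1 j]
        · simp [h2 i j h, h]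
      · right
        refine ⟨j₀, ?_⟩
        symm
        funext i j
        by_cases h : j = j₀
        · subst h; simp [h1 i]
        · simp [h2 i j h, h]
    · rintro (⟨i₀, rfl⟩ | ⟨j₀, rfl⟩)
      · exact rowMat_mem i₀
      · exact colMat_mem j₀
  have hinjR : Function.Injective (fun i₀ : Fin n => fun i _ : Fin n => decide (i ≠ i₀)) := by
    intro a c h
    have h2 := congrFun (congrFun h a) a
    rw [decide_eq_decide] at h2
    by_contra hne
    exact absurd rfl (h2.mpr hne)
  have hinjC : Function.Injective (fun j₀ : Fin n => fun _ j : Fin n => decide (j ≠ j₀)) := by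
    intro a c h
    have h2 := congrFun (congrFun h a) a
    rw [decide_eq_decide] at h2
    by_contra hne
    exact absurd rfl (h2.mpr hne)
  have hdisj : Disjoint (Finset.univ.image fun i₀ : Fin n => fun i _ : Fin n => decide (i ≠ i₀))
      (Finset.univ.image fun j₀ : Fin n => fun _ j : Fin n => decide (j ≠ j₀)) := by
    rw [Finset.disjoint_left]
    rintro b hb1 hb2
    simp only [Finset.mem_image, Finset.mem_univ, true_and] at hb1 hb2
    obtain ⟨i₀, rfl⟩ := hb1
    obtain ⟨j₀, hc⟩ := hb2
    obtain ⟨j, hj⟩ := exists_ne j₀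
    have h3 := congrFun (congrFun hc i₀) j
    rw [decide_eq_decide] at h3
    exact absurd rfl (h3.mp hj)
  rw [hset, Finset.card_union_of_disjoint hdisj,
    Finset.card_image_of_injective _ hinjR, Finset.card_image_of_injective _ hinjC]
  simp only [Finset.card_univ, Fintype.card_fin]
  omega
end

section
/- Let n ≥ 1 and consider n×n matrices with entries in {0,1} all of whose diagonal entries equal 1. Every such matrix with permanent 1 has at most (n²−n)/2 off-diagonal entries equal to 1; moreover this bound is attained, e.g., by the matrix with 1's on and above the diagonal and 0's below the diagonal, which has permanent 1 and exactly (n²−n)/2 off-diagonal entries equal to 1. -/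
/-!
A binary matrix with unit diagonal has the identity term `1` in its permanent. If it had
ones in both positions `(i, j)` and `(j, i)` with `i ≠ j`, the transposition `(i j)` would
contribute a second term `1`, and since all terms are nonnegative the permanent would be at
least `2`. So the off-diagonal ones of a matrix with permanent `1` meet every pair
`{(i, j), (j, i)}` at most once, which leaves room for at most half of the `n² - n`
off-diagonal positions. The upper unitriangular matrix attains this: like its determinant,
its permanent is the product of its diagonal entries.
-/

open Finset Equiv

theorem Equiv.Perm.eq_one_of_forall_apply_le {ι : Type*} [LinearOrder ι] [WellFoundedLT ι]
    (σ : Perm ι) (h : ∀ i, σ i ≤ i) : σ = 1 := by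
  ext i
  induction i using WellFoundedLT.induction with
  | _ i ih =>
    rcases (h i).lt_or_eq with hlt | heq
    · exact σ.injective (ih _ hlt)
    · exact heq

namespace Matrix

variable {ι R : Type*} [Fintype ι] [DecidableEq ι] [CommSemiring R]

theorem permanent_of_isUpperTriangular [LinearOrder ι] {M : Matrix ι ι R}
    (hM : M.IsUpperTriangular) : M.permanent = ∏ i, M i i := by
  rw [permanent, sum_eq_single_of_mem 1 (mem_univ _)]
  · simp
  · intro σ _ hσ
    obtain ⟨i, hi⟩ : ∃ i, i < σ i := by
      by_contra! h
      exact hσ (σ.eq_one_of_forall_apply_le h)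
    exact prod_eq_zero (mem_univ i) (hM hi)

theorem prod_add_prod_le_permanent [PartialOrder R] [IsOrderedRing R] {M : Matrix ι ι R}
    (hM : ∀ i j, 0 ≤ M i j) {σ τ : Perm ι} (hστ : σ ≠ τ) :
    ∏ i, M (σ i) i + ∏ i, M (τ i) i ≤ M.permanent := by
  rw [← sum_pair (f := fun π : Perm ι => ∏ i, M (π i) i) hστ, permanent]
  exact sum_le_sum_of_subset_of_nonneg (subset_univ _)
    fun π _ _ => prod_nonneg fun i _ => hM _ _

theorem prod_swap_eq_one {M : Matrix ι ι R} (hdiag : ∀ i, M i i = 1) {i j : ι}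
    (hij : M i j = 1) (hji : M j i = 1) : ∏ k, M (Equiv.swap i j k) k = 1 := by
  refine prod_eq_one fun k _ => ?_
  rcases eq_or_ne k i with rfl | hki
  · rwa [swap_apply_left]
  rcases eq_or_ne k j with rfl | hkj
  · rwa [swap_apply_right]
  · rw [swap_apply_of_ne_of_ne hki hkj, hdiag]

theorem apply_ne_one_of_permanent_eq_one [PartialOrder R] [IsStrictOrderedRing R]
    {M : Matrix ι ι R} (hM : ∀ i j, 0 ≤ M i j) (hdiag : ∀ i, M i i = 1)
    (hperm : M.permanent = 1) {i j : ι} (hne : i ≠ j) (hij : M i j = 1) : M j i ≠ 1 := by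
  intro hji
  have hid : ∏ k, M ((1 : Perm ι) k) k = 1 := by simp [hdiag]
  have hσ : (1 : Perm ι) ≠ Equiv.swap i j := fun h => hne (by simpa using congr($h i))
  have hle := prod_add_prod_le_permanent hM hσ
  rw [hid, prod_swap_eq_one hdiag hij hji, hperm] at hle
  exact (lt_add_of_pos_right 1 one_pos).not_ge hle

end Matrix

namespace Finset

variable {α : Type*} [DecidableEq α]

theorem card_union_image_swap {S : Finset (α × α)} (h : ∀ p ∈ S, p.swap ∉ S) :
    #(S ∪ S.image Prod.swap) = 2 * #S := by
  rw [card_union_of_disjoint, card_image_of_injective _ Prod.swap_injective, two_mul]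
  rw [disjoint_left]
  intro _ hp hp'
  obtain ⟨q, hq, rfl⟩ := mem_image.1 hp'
  exact h q hq hp

theorem two_mul_card_le_card_offDiag {s : Finset α} {S : Finset (α × α)}
    (hS : S ⊆ s.offDiag) (h : ∀ p ∈ S, p.swap ∉ S) : 2 * #S ≤ #s.offDiag := by
  rw [← card_union_image_swap h]
  refine card_le_card (union_subset hS ?_)
  intro _ hp'
  obtain ⟨p, hp, rfl⟩ := mem_image.1 hp'
  obtain ⟨h1, h2, hne⟩ := mem_offDiag.1 (hS hp)
  exact mem_offDiag.2 ⟨h2, h1, hne.symm⟩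

theorem two_mul_card_filter_lt [Fintype α] [LinearOrder α] :
    2 * #{p : α × α | p.1 < p.2} = #(univ : Finset α).offDiag := by
  rw [← card_union_image_swap (by simp +contextual [le_of_lt])]
  congr 1
  ext ⟨i, j⟩
  simp only [mem_union, mem_filter, mem_image, mem_univ, true_and, mem_offDiag, Prod.exists,
    Prod.swap_prod_mk, Prod.mk.injEq]
  grind

end Finset

theorem typeC_binary_permanent_one_max_ones_general
    (n : ℕ) :
    (∀ M : Matrix (Fin n) (Fin n) ℝ, (∀ i j, M i j = 0 ∨ M i j = 1) →
      (∀ i, M i i = 1) → M.permanent = 1 →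
      (Finset.univ.filter fun p : Fin n × Fin n => p.1 ≠ p.2 ∧ M p.1 p.2 = 1).card
        ≤ (n ^ 2 - n) / 2)
    ∧ (Matrix.of fun i j : Fin n => if i ≤ j then (1 : ℝ) else 0).permanent = 1
    ∧ (Finset.univ.filter fun p : Fin n × Fin n =>
        p.1 ≠ p.2 ∧ (Matrix.of fun i j : Fin n => if i ≤ j then (1 : ℝ) else 0) p.1 p.2 = 1).card
        = (n ^ 2 - n) / 2 := by
  have hoff : #(univ : Finset (Fin n)).offDiag = n ^ 2 - n := by simp [offDiag_card, sq]
  refine ⟨fun M h01 hdiag hperm => ?_, ?_, ?_⟩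
  · have hM : ∀ i j, 0 ≤ M i j := fun i j => by rcases h01 i j with h | h <;> simp [h]
    rw [Nat.le_div_iff_mul_le two_pos, mul_comm, ← hoff]
    refine two_mul_card_le_card_offDiag (fun p hp => by simp_all) fun p hp hswap => ?_
    simp only [mem_filter, mem_univ, true_and, Prod.fst_swap, Prod.snd_swap] at hp hswap
    exact Matrix.apply_ne_one_of_permanent_eq_one hM hdiag hperm hp.1 hp.2 hswap.2
  · rw [Matrix.permanent_of_isUpperTriangular fun i j hji => by simp [(show j < i from hji).not_ge]]
    simp
  · have hlt : (univ.filter fun p : Fin n × Fin n =>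
        p.1 ≠ p.2 ∧ (Matrix.of fun i j : Fin n => if i ≤ j then (1 : ℝ) else 0) p.1 p.2 = 1)
        = ({p | p.1 < p.2} : Finset (Fin n × Fin n)) := by
      ext ⟨i, j⟩
      simp only [mem_filter, mem_univ, true_and, Matrix.of_apply, lt_iff_le_and_ne]
      grind
    rw [hlt, ← hoff, ← two_mul_card_filter_lt]
    omega

/-- Every binary `n × n` matrix with all diagonal entries equal to `1`
and permanent `1` has at most `(n² - n)/2` off-diagonal entries equal to `1`; and this
bound is attained by the matrix with `1`'s on and above the diagonal and `0`'s below. -/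
theorem typeC_binary_permanent_one_max_ones
    (n : ℕ) (hn : 1 ≤ n) :
    (∀ M : Matrix (Fin n) (Fin n) ℝ, (∀ i j, M i j = 0 ∨ M i j = 1) →
      (∀ i, M i i = 1) → M.permanent = 1 →
      (Finset.univ.filter fun p : Fin n × Fin n => p.1 ≠ p.2 ∧ M p.1 p.2 = 1).card
        ≤ (n ^ 2 - n) / 2)
    ∧ (Matrix.of fun i j : Fin n => if i ≤ j then (1 : ℝ) else 0).permanent = 1
    ∧ (Finset.univ.filter fun p : Fin n × Fin n =>
        p.1 ≠ p.2 ∧ (Matrix.of fun i j : Fin n => if i ≤ j then (1 : ℝ) else 0) p.1 p.2 = 1).card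
        = (n ^ 2 - n) / 2 :=
  typeC_binary_permanent_one_max_ones_general n
end

section
/- Let S be an n×n matrix with entries in {0,1} all of whose diagonal entries equal 1, and let G(S) be the digraph with vertex set {1,…,n} and edge set {(k,l) : k ≠ l and S_kl = 1}. Then per S = 1 if and only if G(S) is acyclic. Moreover, if G(S) contains a directed cycle then per S > 1. -/
open Finset Equiv

lemma hasDicycle_iff_perm
    (n : ℕ) (S : Matrix (Fin n) (Fin n) ℝ) :
    HasDicycle (Finset.univ.filter fun p : Fin n × Fin n => p.1 ≠ p.2 ∧ S p.1 p.2 = 1) ↔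
      ∃ σ : Equiv.Perm (Fin n), σ ≠ 1 ∧ ∀ i, i ≠ σ i → S (σ i) i = 1 := by
  classical
  constructor
  · rintro ⟨j, hj, k, hk, hke⟩
    haveI : NeZero j := ⟨by omega⟩
    haveI : Fact (1 < j) := ⟨hj⟩
    let e : Equiv.Perm (ZMod j) := Equiv.addRight (-1 : ZMod j)
    let σ := e.viaFintypeEmbedding ⟨k, hk⟩
    have hσk : ∀ a : ZMod j, σ (k a) = k (a - 1) := by
      intro a
      have := Equiv.Perm.viaFintypeEmbedding_apply_image e ⟨k, hk⟩ a
      simpa [σ, e, sub_eq_add_neg] using this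
    refine ⟨σ, ?_, ?_⟩
    · intro h
      have h0 : σ (k 0) = k 0 := by rw [h]; rfl
      rw [hσk 0] at h0
      have : (0 : ZMod j) - 1 = 0 := hk h0
      simp only [zero_sub, neg_eq_zero] at this
      exact one_ne_zero this
    · intro i hi
      by_cases hr : i ∈ Set.range (⟨k, hk⟩ : ZMod j ↪ Fin n)
      · obtain ⟨a, ha⟩ := hr
        have ha' : k a = i := ha
        subst ha'
        rw [hσk a]
        have := hke (a - 1)
        simp only [Finset.mem_filter, Finset.mem_univ, true_and, sub_add_cancel] at this
        exact this.2
      · exact absurd (Equiv.Perm.viaFintypeEmbedding_apply_notMem_range e ⟨k, hk⟩ hr) (Ne.symm hi)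
  · rintro ⟨σ, hσ, hS⟩
    obtain ⟨i, hi⟩ : ∃ i, σ i ≠ i := by
      by_contra h
      push_neg at h
      exact hσ (Equiv.ext h)
    set τ : Equiv.Perm (Fin n) := σ⁻¹ with hτ
    have hτi : τ i ≠ i := by
      intro h
      have h2 : i = σ i := by simpa [τ] using congrArg σ h
      exact hi h2.symm
    have hperpt : i ∈ Function.periodicPts ⇑τ := by
      refine ⟨orderOf τ, orderOf_pos τ, ?_⟩
      show τ^[orderOf τ] i = i
      rw [Equiv.Perm.iterate_eq_pow, pow_orderOf_eq_one]
      rfl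
    set j := Function.minimalPeriod ⇑τ i with hjdef
    have hjpos : 0 < j := Function.minimalPeriod_pos_of_mem_periodicPts hperpt
    have hj1 : j ≠ 1 := by
      intro h
      have := Function.isPeriodicPt_minimalPeriod ⇑τ i
      rw [← hjdef, h] at this
      exact hτi this
    have hj2 : 2 ≤ j := by omega
    haveI : NeZero j := ⟨by omega⟩
    haveI : Fact (1 < j) := ⟨hj2⟩
    -- non-fixed points along the orbit
    have horb : ∀ s : ℕ, τ (τ^[s] i) ≠ τ^[s] i := by
      intro s h
      apply hτi
      have h1 : τ^[s] (τ i) = τ^[s] i := by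
        rw [← Function.iterate_succ_apply, Function.iterate_succ_apply'] ; exact h
      exact (Function.Injective.iterate τ.injective s) h1
    refine ⟨j, hj2, fun a => τ^[a.val] i, ?_, ?_⟩
    · intro a b hab
      have ha := ZMod.val_lt a
      have hb := ZMod.val_lt b
      have := Function.iterate_injOn_Iio_minimalPeriod (f := ⇑τ) (x := i)
        (Set.mem_Iio.mpr ha) (Set.mem_Iio.mpr hb) hab
      exact ZMod.val_injective j this
    · intro a
      have hsucc : τ^[(a + 1).val] i = τ (τ^[a.val] i) := by
        have h1 : (a + 1).val = (a.val + 1) % j := by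
          rw [ZMod.val_add, ZMod.val_one]
        rw [h1]
        have h2 := Function.iterate_mod_minimalPeriod_eq (f := ⇑τ) (x := i) (n := a.val + 1)
        rw [Function.iterate_succ_apply'] at h2
        exact h2
      simp only [Finset.mem_filter, Finset.mem_univ, true_and]
      rw [hsucc]
      constructor
      · exact fun h => horb a.val h.symm
      · have : σ (τ (τ^[a.val] i)) = τ^[a.val] i := by simp [τ]
        have hne : τ (τ^[a.val] i) ≠ σ (τ (τ^[a.val] i)) := by
          rw [this]; exact fun h => horb a.val h
        have := hS (τ (τ^[a.val] i)) hne
        rwa [show σ (τ (τ^[a.val] i)) = τ^[a.val] i from by simp [τ]] at this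

/-- Let `S` be a binary `n × n` matrix with all diagonal entries equal
to `1`, and let `G(S)` be the digraph on `{1, …, n}` with an edge `(k, l)` whenever
`k ≠ l` and `S k l = 1`. Then `per S = 1` iff `G(S)` is acyclic; moreover if `G(S)` has
a directed cycle then `per S > 1`. -/
theorem permanent_one_iff_acyclic
    (n : ℕ) (S : Matrix (Fin n) (Fin n) ℝ)
    (hbin : ∀ i j, S i j = 0 ∨ S i j = 1) (hdiag : ∀ i, S i i = 1) :
    (S.permanent = 1 ↔
      ¬ HasDicycle (Finset.univ.filter fun p : Fin n × Fin n => p.1 ≠ p.2 ∧ S p.1 p.2 = 1))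
    ∧ (HasDicycle (Finset.univ.filter fun p : Fin n × Fin n => p.1 ≠ p.2 ∧ S p.1 p.2 = 1) →
        1 < S.permanent) := by
  classical
  set A := Finset.univ.filter (fun σ : Equiv.Perm (Fin n) => ∀ i, S (σ i) i = 1) with hA
  have h1A : (1 : Equiv.Perm (Fin n)) ∈ A := by
    simp only [hA, Finset.mem_filter, Finset.mem_univ, true_and]
    intro i; simpa using hdiag i
  have hprod : ∀ σ : Equiv.Perm (Fin n),
      (∏ i, S (σ i) i) = if (∀ i, S (σ i) i = 1) then (1 : ℝ) else 0 := by
    intro σ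
    split_ifs with h
    · exact Finset.prod_eq_one fun i _ => h i
    · push_neg at h
      obtain ⟨i, hi⟩ := h
      exact Finset.prod_eq_zero (Finset.mem_univ i) ((hbin (σ i) i).resolve_right hi)
  have hper : S.permanent = (A.card : ℝ) := by
    rw [Matrix.permanent, hA, ← Finset.sum_boole]
    exact Finset.sum_congr rfl fun σ _ => hprod σ
  have hmem : ∀ σ : Equiv.Perm (Fin n),
      (σ ∈ A ∧ σ ≠ 1) ↔ (σ ≠ 1 ∧ ∀ i, i ≠ σ i → S (σ i) i = 1) := by
    intro σ
    simp only [hA, Finset.mem_filter, Finset.mem_univ, true_and]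
    constructor
    · rintro ⟨h, hne⟩; exact ⟨hne, fun i _ => h i⟩
    · rintro ⟨hne, h⟩
      refine ⟨fun i => ?_, hne⟩
      by_cases hi : i = σ i
      · rw [← hi]; exact hdiag i
      · exact h i hi
  have key : HasDicycle (Finset.univ.filter fun p : Fin n × Fin n => p.1 ≠ p.2 ∧ S p.1 p.2 = 1)
      ↔ ∃ σ, σ ∈ A ∧ σ ≠ 1 :=
    (hasDicycle_iff_perm n S).trans (exists_congr fun σ => (hmem σ).symm)
  have part2 : HasDicycle (Finset.univ.filter fun p : Fin n × Fin n => p.1 ≠ p.2 ∧ S p.1 p.2 = 1)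
      → 1 < S.permanent := by
    intro h
    obtain ⟨σ, hσA, hσ1⟩ := key.mp h
    have hcard : 1 < A.card := Finset.one_lt_card.mpr ⟨1, h1A, σ, hσA, Ne.symm hσ1⟩
    rw [hper]
    exact_mod_cast hcard
  refine ⟨⟨?_, ?_⟩, part2⟩
  · intro hp hd
    exact absurd hp (ne_of_gt (part2 hd))
  · intro hnd
    have hsub : A ⊆ {1} := by
      intro σ hσ
      rw [Finset.mem_singleton]
      by_contra hne
      exact hnd (key.mpr ⟨σ, hσ, hne⟩)
    have : A = {1} := Finset.Subset.antisymm hsub (Finset.singleton_subset_iff.mpr h1A)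
    rw [hper, this, Finset.card_singleton, Nat.cast_one]
end

section
/- For all n ≥ 1 and all i ≥ 0, the number of n×n matrices with entries in {0,1} that have all diagonal entries equal to 1, permanent equal to 1, and exactly i off-diagonal entries equal to 1, is equal to the number of acyclic digraphs with vertex set {1,…,n} and exactly i edges. -/
namespace AuxAD

variable {n : ℕ}

open Finset

/-- The edge set of a boolean matrix. -/
def edges (b : Fin n → Fin n → Bool) : Finset (Fin n × Fin n) :=
  Finset.univ.filter fun p : Fin n × Fin n => p.1 ≠ p.2 ∧ b p.1 p.2 = true

lemma mem_edges {b : Fin n → Fin n → Bool} {p : Fin n × Fin n} :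
    p ∈ edges b ↔ p.1 ≠ p.2 ∧ b p.1 p.2 = true := by
  simp [edges]

lemma permanent_eq_card (b : Fin n → Fin n → Bool) :
    (boolToMatrix b).permanent =
      ((Finset.univ.filter fun σ : Equiv.Perm (Fin n) => ∀ x, b (σ x) x = true).card : ℝ) := by
  classical
  rw [Matrix.permanent]
  have : ∀ σ : Equiv.Perm (Fin n),
      (∏ x, boolToMatrix b (σ x) x) = if (∀ x, b (σ x) x = true) then (1:ℝ) else 0 := by
    intro σ
    simp only [boolToMatrix, Matrix.of_apply]
    rw [Fintype.prod_boole (p := fun x => b (σ x) x = true)]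
    congr
  simp_rw [this]
  rw [Finset.sum_boole]

lemma permanent_one_iff {b : Fin n → Fin n → Bool} (hd : ∀ k, b k k = true) :
    (boolToMatrix b).permanent = 1 ↔
      ∀ σ : Equiv.Perm (Fin n), (∀ x, b (σ x) x = true) → σ = 1 := by
  classical
  rw [permanent_eq_card]
  rw [show (1:ℝ) = ((1:ℕ):ℝ) by norm_num, Nat.cast_inj]
  set s := Finset.univ.filter fun σ : Equiv.Perm (Fin n) => ∀ x, b (σ x) x = true with hs
  have h1 : (1 : Equiv.Perm (Fin n)) ∈ s := by simp [hs, hd]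
  constructor
  · intro hc σ hσ
    have hσs : σ ∈ s := by simp [hs, hσ]
    obtain ⟨a, ha⟩ := Finset.card_eq_one.mp hc
    rw [ha, Finset.mem_singleton] at h1 hσs
    rw [hσs, h1]
  · intro h
    have : s = {1} := Finset.eq_singleton_iff_unique_mem.2
      ⟨h1, fun σ hσ => h σ (by simpa [hs] using hσ)⟩
    rw [this, Finset.card_singleton]

lemma exists_perm_of_dicycle {b : Fin n → Fin n → Bool} (hd : ∀ k, b k k = true)
    (h : HasDicycle (edges b)) :
    ∃ σ : Equiv.Perm (Fin n), σ ≠ 1 ∧ ∀ x, b (σ x) x = true := by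
  classical
  obtain ⟨j, hj, k, hk, he⟩ := h
  haveI : NeZero j := ⟨by omega⟩
  haveI : Fact (1 < j) := ⟨by omega⟩
  set f : Fin n → Fin n := fun x => if h : ∃ a, k a = x then k (Classical.choose h - 1) else x
    with hf
  have hfim : ∀ a : ZMod j, f (k a) = k (a - 1) := by
    intro a
    have hex : ∃ c, k c = k a := ⟨a, rfl⟩
    have hch : Classical.choose hex = a := hk (Classical.choose_spec hex)
    simp only [hf, dif_pos hex, hch]
  have hfnot : ∀ x, (¬ ∃ a, k a = x) → f x = x := fun x hx => dif_neg hx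
  have hinj : Function.Injective f := by
    intro x y hxy
    by_cases hx : ∃ a, k a = x <;> by_cases hy : ∃ a, k a = y
    · obtain ⟨a, rfl⟩ := hx; obtain ⟨c, rfl⟩ := hy
      rw [hfim, hfim] at hxy
      have := hk hxy
      have : a = c := by
        have := congrArg (· + 1) this
        simpa using this
      rw [this]
    · obtain ⟨a, rfl⟩ := hx
      rw [hfim, hfnot y hy] at hxy
      exact absurd ⟨a - 1, hxy⟩ hy
    · obtain ⟨c, rfl⟩ := hy
      rw [hfim, hfnot x hx] at hxy
      exact absurd ⟨c - 1, hxy.symm⟩ hx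
    · rwa [hfnot x hx, hfnot y hy] at hxy
  let σ : Equiv.Perm (Fin n) := Equiv.ofBijective f (Finite.injective_iff_bijective.mp hinj)
  have hσ : ∀ x, σ x = f x := fun _ => rfl
  refine ⟨σ, ?_, ?_⟩
  · intro hσ1
    have h01 : k 0 ≠ k 1 := fun h => zero_ne_one (hk h)
    have : σ (k 1) = k 1 := by rw [hσ1]; rfl
    rw [hσ (k 1), hfim 1, sub_self] at this
    exact h01 this
  · intro x
    rw [hσ x]
    by_cases hx : ∃ a, k a = x
    · obtain ⟨a, rfl⟩ := hx
      rw [hfim a]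
      have := he (a - 1)
      rw [sub_add_cancel] at this
      exact (mem_edges.mp this).2
    · rw [hfnot x hx]; exact hd x

lemma dicycle_of_perm {b : Fin n → Fin n → Bool} {σ : Equiv.Perm (Fin n)}
    (hσ : σ ≠ 1) (hb : ∀ x, b (σ x) x = true) : HasDicycle (edges b) := by
  classical
  obtain ⟨x, hx⟩ : ∃ x, σ x ≠ x := by
    by_contra h; push_neg at h
    exact hσ (Equiv.ext fun y => (h y).trans (Equiv.Perm.one_apply y).symm)
  set j := Function.minimalPeriod σ x with hjdef
  have hper : x ∈ Function.periodicPts σ := by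
    refine ⟨orderOf σ, orderOf_pos σ, ?_⟩
    show (⇑σ)^[orderOf σ] x = x
    rw [Equiv.Perm.iterate_eq_pow, pow_orderOf_eq_one]
    rfl
  have hjpos : 0 < j := Function.minimalPeriod_pos_of_mem_periodicPts hper
  have hj1 : j ≠ 1 := fun h => hx (Function.minimalPeriod_eq_one_iff_isFixedPt.mp h)
  have hj2 : 2 ≤ j := by omega
  haveI : NeZero j := ⟨by omega⟩
  have hpj : (⇑σ)^[j] x = x := Function.iterate_minimalPeriod
  -- if σ^[d] x = x with d < j then d = 0
  have hmin : ∀ d : ℕ, d < j → (⇑σ)^[d] x = x → d = 0 := by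
    intro d hd hdx
    exact Nat.eq_zero_of_dvd_of_lt (Function.IsPeriodicPt.minimalPeriod_dvd hdx) hd
  set k : ZMod j → Fin n := fun a => (⇑σ)^[j - a.val] x with hkdef
  have hiter : ∀ m : ℕ, m ≤ j → (⇑σ)^[m] ((⇑σ)^[j - m] x) = x := by
    intro m hm
    rw [← Function.iterate_add_apply]
    have : m + (j - m) = j := by omega
    rw [this, hpj]
  have hval : ∀ a : ZMod j, a.val + 1 < j → (a + 1).val = a.val + 1 := by
    intro a ha
    have h1 : a + 1 = ((a.val + 1 : ℕ) : ZMod j) := by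
      push_cast [ZMod.natCast_val, ZMod.cast_id]
      ring
    rw [h1, ZMod.val_cast_of_lt ha]
  have hval2 : ∀ a : ZMod j, a.val + 1 = j → (a + 1).val = 0 := by
    intro a ha
    have h1 : a + 1 = ((a.val + 1 : ℕ) : ZMod j) := by
      push_cast [ZMod.natCast_val, ZMod.cast_id]
      ring
    rw [h1, ha, ZMod.natCast_self, ZMod.val_zero]
  have hstep : ∀ a : ZMod j, σ (k (a + 1)) = k a := by
    intro a
    have hav : a.val < j := ZMod.val_lt a
    by_cases hc : a.val + 1 < j
    · rw [hkdef]
      simp only [hval a hc]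
      rw [← Function.iterate_succ_apply' σ]
      congr 1
      omega
    · have hc' : a.val + 1 = j := by omega
      rw [hkdef]
      simp only [hval2 a hc']
      rw [Nat.sub_zero, hpj]
      have h1 : j - a.val = 1 := by omega
      rw [h1, Function.iterate_one]
  have hkinj : Function.Injective k := by
    have key : ∀ a c : ZMod j, a.val ≤ c.val → k a = k c → a = c := by
      intro a c hac h
      have hav : a.val < j := ZMod.val_lt a
      have hcv : c.val < j := ZMod.val_lt c
      have h2 : (⇑σ)^[j - c.val] ((⇑σ)^[c.val - a.val] x) = (⇑σ)^[j - c.val] x := by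
        rw [← Function.iterate_add_apply]
        have : j - c.val + (c.val - a.val) = j - a.val := by omega
        rw [this]; exact h
      have hinj : Function.Injective ((⇑σ)^[j - c.val]) := by
        rw [Equiv.Perm.iterate_eq_pow]
        exact (σ ^ (j - c.val)).injective
      have h3 : (⇑σ)^[c.val - a.val] x = x := hinj h2
      have h4 : c.val - a.val = 0 := hmin _ (by omega) h3
      exact ZMod.val_injective j (by omega)
    intro a c h
    rcases le_total a.val c.val with hle | hle
    · exact key a c hle h
    · exact (key c a hle h.symm).symm
  refine ⟨j, hj2, k, hkinj, fun a => mem_edges.mpr ⟨?_, ?_⟩⟩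
  · intro hkk
    have : a = a + 1 := hkinj hkk
    haveI hfact : Fact (1 < j) := ⟨by omega⟩
    have h01 : (0 : ZMod j) = 1 := by
      have := congrArg (· - a) this
      simpa using this
    exact zero_ne_one h01
  · rw [← hstep a]
    exact hb _

lemma edges_acyclic {b : Fin n → Fin n → Bool} (hd : ∀ k, b k k = true)
    (hp : (boolToMatrix b).permanent = 1) : IsAcyclicDigraph (edges b) := by
  refine ⟨fun e he => (mem_edges.mp he).1, fun hc => ?_⟩
  obtain ⟨σ, hσ1, hσ2⟩ := exists_perm_of_dicycle hd hc
  exact hσ1 ((permanent_one_iff hd).mp hp σ hσ2)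

/-- The boolean matrix associated with an edge set. -/
def backB (E : Finset (Fin n × Fin n)) : Fin n → Fin n → Bool :=
  fun k l => decide (k = l ∨ (k, l) ∈ E)

lemma backB_diag (E : Finset (Fin n × Fin n)) : ∀ k, backB E k k = true := by
  simp [backB]

lemma edges_backB {E : Finset (Fin n × Fin n)} (hE : ∀ e ∈ E, e.1 ≠ e.2) :
    edges (backB E) = E := by
  ext p
  obtain ⟨k, l⟩ := p
  simp only [mem_edges, backB, decide_eq_true_eq]
  constructor
  · rintro ⟨h1, h2 | h2⟩
    · exact absurd h2 h1
    · exact h2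
  · intro h
    exact ⟨hE _ h, Or.inr h⟩

lemma backB_perm {E : Finset (Fin n × Fin n)} (h : IsAcyclicDigraph E) :
    (boolToMatrix (backB E)).permanent = 1 := by
  refine (permanent_one_iff (backB_diag E)).mpr fun σ hσ => ?_
  by_contra hne
  exact h.2 (edges_backB h.1 ▸ dicycle_of_perm hne hσ)

lemma backB_edges {b : Fin n → Fin n → Bool} (hd : ∀ k, b k k = true) :
    backB (edges b) = b := by
  funext k l
  by_cases h : k = l
  · subst h; simp [backB, hd]
  · simp only [backB, mem_edges, decide_eq_true_eq]
    by_cases hb : b k l = true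
    · simp [h, hb]
    · simp only [Bool.not_eq_true] at hb
      simp [h, hb]

end AuxAD

/-- For all `n ≥ 1` and `i`, the number of binary `n × n` matrices with
all diagonal entries `1`, permanent `1`, and exactly `i` off-diagonal entries equal to
`1`, equals the number of acyclic digraphs with vertex set `{1, …, n}` and exactly `i`
edges. -/
theorem card_typeC_permanent_one_eq_card_acyclic_digraphs
    (n : ℕ) (hn : 1 ≤ n) (i : ℕ) :
    Nat.card {b : Fin n → Fin n → Bool //
        (∀ k, b k k = true) ∧ (boolToMatrix b).permanent = 1 ∧
        (Finset.univ.filter fun p : Fin n × Fin n =>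
          p.1 ≠ p.2 ∧ b p.1 p.2 = true).card = i}
      = Nat.card {E : Finset (Fin n × Fin n) // IsAcyclicDigraph E ∧ E.card = i} := by
  classical
  apply Nat.card_congr
  refine ⟨fun b => ⟨AuxAD.edges b.1, AuxAD.edges_acyclic b.2.1 b.2.2.1, ?_⟩,
    fun E => ⟨AuxAD.backB E.1, AuxAD.backB_diag E.1, AuxAD.backB_perm E.2.1, ?_⟩,
    fun b => Subtype.ext (AuxAD.backB_edges b.2.1), fun E => Subtype.ext (AuxAD.edges_backB E.2.1.1)⟩
  · exact b.2.2.2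
  · have : AuxAD.edges (AuxAD.backB E.1) = E.1 := AuxAD.edges_backB E.2.1.1
    calc (Finset.univ.filter fun p : Fin n × Fin n =>
          p.1 ≠ p.2 ∧ AuxAD.backB E.1 p.1 p.2 = true).card
        = (AuxAD.edges (AuxAD.backB E.1)).card := by rfl
      _ = E.1.card := by rw [this]
      _ = i := E.2.2
end
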